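/- arXiv:1203.4306 — 7 statements merged into one kernel-verified Lean document; each statement's English description precedes it below -/
import Mathlib

section
/- Let γ > 1, α > 0, ρ̄ ≥ 0, M > 0 and T > 0. Suppose ρ, u : [−M, M] × [0, T] → ℝ are twice continuously differentiable, ρ(x,t) > 0 everywhere, the equations ρ_t + (ρu)_x = 0 and (ρu)_t + (ρu² + ρ^γ)_x = (ρ^α u_x)_x hold pointwise, and u(−M, t) = u(M, t) = 0 for all t ∈ [0, T]. Then for every t ∈ [0, T], ∫_{−M}^{M} [ (α/2)·ρ·(u + ρ^{α−2}ρ_x)² + (1/2)·ρ·u² + (α+1)·ρ·Ψ(ρ, ρ̄) ](x, t) dx + ∫_0^t ∫_{−M}^{M} [ ρ^α·(u_x)² + α·γ·ρ^{γ+α−3}·(ρ_x)² ](x, s) dx ds = ∫_{−M}^{M} [ (α/2)·ρ·(u + ρ^{α−2}ρ_x)² + (1/2)·ρ·u² + (α+1)·ρ·Ψ(ρ, ρ̄) ](x, 0) dx. -/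
open Real MeasureTheory intervalIntegral

/-- Partial derivative in the first (space) variable. -/
noncomputable def pderivX (f : ℝ → ℝ → ℝ) (x t : ℝ) : ℝ := deriv (fun y => f y t) x

/-- Partial derivative in the second (time) variable. -/
noncomputable def pderivT (f : ℝ → ℝ → ℝ) (x t : ℝ) : ℝ := deriv (fun s => f x s) t

/-- The pressure potential `Ψ(ρ, ρ̄)` for the pressure law `P(ρ) = ρ^γ`. -/
noncomputable def psi (γ ρ ρb : ℝ) : ℝ :=
  (1 / ((γ - 1) * ρ)) * (ρ ^ γ - ρb ^ γ - γ * ρb ^ (γ - 1) * (ρ - ρb))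

/-!
With the effective velocity `w = u + ρ^(α-2) ρ_x`, the density
`E = (α/2) ρ w² + (1/2) ρ u² + (α+1) ρΨ(ρ, ρ̄)` satisfies the local balance law
`∂ₜE + ∂ₓG + D = 0` with flux `G = u (E + (α+1)(ρ^γ - ρ̄^γ) - ρ^α u_x)` and dissipation
`D = ρ^α u_x² + αγ ρ^(γ+α-3) ρ_x²`. This combines the energy balance (momentum equation times
`u`) with the Bresch–Desjardins one: the mass equation and its `x`-derivative turn the momentum
equation into `ρ (w_t + u w_x) = -(ρ^γ)_x`. Integrating the balance law over `[-M, M] × [0, t]` by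
the divergence theorem gives the identity, the flux through `x = ±M` vanishing because `G`
carries the factor `u`.
-/

open Set Filter Topology Function

lemma fderiv_fderiv_apply_comm {E G : Type*} [NormedAddCommGroup E] [NormedSpace ℝ E]
    [NormedAddCommGroup G] [NormedSpace ℝ G] {f : E → G} {p : E} (hf : ContDiffAt ℝ 2 f p)
    (v w : E) :
    fderiv ℝ (fun q => fderiv ℝ f q v) p w = fderiv ℝ (fun q => fderiv ℝ f q w) p v := by
  have hD : ∀ v, HasFDerivAt (fun q => fderiv ℝ f q v)
      ((fderiv ℝ f p).comp 0 + (fderiv ℝ (fderiv ℝ f) p).flip v) p := fun v =>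
    ((hf.fderiv_right (m := 1) le_rfl).differentiableAt one_ne_zero).hasFDerivAt.clm_apply
      (hasFDerivAt_const v p)
  simp only [(hD v).fderiv, (hD w).fderiv, ContinuousLinearMap.comp_zero, zero_add,
    ContinuousLinearMap.flip_apply]
  exact hf.isSymmSndFDerivAt (by simp) w v

section PartialDerivatives

variable {S : Set (ℝ × ℝ)} {F : ℝ × ℝ → ℝ} {a b c d x t : ℝ} {p : ℝ × ℝ}

/-- Partial derivatives within `S`: unlike `pderivX` and `pderivT`, for a `C¹` function on a
closed rectangle they are continuous up to its boundary. -/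
noncomputable def pderivXWithin (S : Set (ℝ × ℝ)) (F : ℝ × ℝ → ℝ) (p : ℝ × ℝ) : ℝ :=
  fderivWithin ℝ F S p (1, 0)

noncomputable def pderivTWithin (S : Set (ℝ × ℝ)) (F : ℝ × ℝ → ℝ) (p : ℝ × ℝ) : ℝ :=
  fderivWithin ℝ F S p (0, 1)

lemma DifferentiableOn.hasDerivAt_pderivXWithin (hF : DifferentiableOn ℝ F (Icc a b ×ˢ Icc c d))
    (hx : x ∈ Ioo a b) (ht : t ∈ Icc c d) :
    HasDerivAt (fun y => F (y, t)) (pderivXWithin (Icc a b ×ˢ Icc c d) F (x, t)) x :=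
  ((hF _ ⟨Ioo_subset_Icc_self hx, ht⟩).hasFDerivWithinAt.comp_hasDerivWithinAt (s := Icc a b) x
    ((hasDerivAt_id x).prodMk (hasDerivAt_const x t)).hasDerivWithinAt
    fun _ hy => ⟨hy, ht⟩).hasDerivAt (Icc_mem_nhds hx.1 hx.2)

lemma DifferentiableOn.hasDerivAt_pderivTWithin (hF : DifferentiableOn ℝ F (Icc a b ×ˢ Icc c d))
    (hx : x ∈ Icc a b) (ht : t ∈ Ioo c d) :
    HasDerivAt (fun s => F (x, s)) (pderivTWithin (Icc a b ×ˢ Icc c d) F (x, t)) t :=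
  ((hF _ ⟨hx, Ioo_subset_Icc_self ht⟩).hasFDerivWithinAt.comp_hasDerivWithinAt (s := Icc c d) t
    ((hasDerivAt_const t x).prodMk (hasDerivAt_id t)).hasDerivWithinAt
    fun _ hs => ⟨hx, hs⟩).hasDerivAt (Icc_mem_nhds ht.1 ht.2)

lemma ContDiffOn.pderivXWithin {m n : WithTop ℕ∞} (hF : ContDiffOn ℝ n F S)
    (hS : UniqueDiffOn ℝ S) (hmn : m + 1 ≤ n) : ContDiffOn ℝ m (pderivXWithin S F) S :=
  (hF.fderivWithin hS hmn).clm_apply contDiffOn_const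

lemma ContDiffOn.pderivTWithin {m n : WithTop ℕ∞} (hF : ContDiffOn ℝ n F S)
    (hS : UniqueDiffOn ℝ S) (hmn : m + 1 ≤ n) : ContDiffOn ℝ m (pderivTWithin S F) S :=
  (hF.fderivWithin hS hmn).clm_apply contDiffOn_const

lemma pderivXWithin_pderivTWithin_comm (hF : ContDiffOn ℝ 2 F S) (hp : S ∈ 𝓝 p) :
    pderivXWithin S (pderivTWithin S F) p = pderivTWithin S (pderivXWithin S F) p := by
  have hint : ∀ v, (fun q => fderivWithin ℝ F S q v) =ᶠ[𝓝 p] fun q => fderiv ℝ F q v := by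
    intro v
    filter_upwards [eventually_mem_nhds_iff.2 hp] with q hq
    rw [fderivWithin_of_mem_nhds hq]
  change fderivWithin ℝ (fun q => fderivWithin ℝ F S q (0, 1)) S p (1, 0)
    = fderivWithin ℝ (fun q => fderivWithin ℝ F S q (1, 0)) S p (0, 1)
  rw [fderivWithin_of_mem_nhds hp, fderivWithin_of_mem_nhds hp, (hint _).fderiv_eq,
    (hint _).fderiv_eq]
  exact fderiv_fderiv_apply_comm (hF.contDiffAt hp) _ _

end PartialDerivatives

lemma intervalIntegral_integral_swap_of_continuousOn {E : Type*} [NormedAddCommGroup E]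
    [NormedSpace ℝ E] {a b c d : ℝ} (hab : a ≤ b) (hcd : c ≤ d) {f : ℝ × ℝ → E}
    (hf : ContinuousOn f (Icc a b ×ˢ Icc c d)) :
    ∫ x in a..b, ∫ y in c..d, f (x, y) = ∫ y in c..d, ∫ x in a..b, f (x, y) := by
  have hint : IntegrableOn f (Ioc a b ×ˢ Ioc c d) :=
    (hf.integrableOn_compact (isCompact_Icc.prod isCompact_Icc)).mono_set
      (prod_mono Ioc_subset_Icc_self Ioc_subset_Icc_self)
  simp only [intervalIntegral.integral_of_le hab, intervalIntegral.integral_of_le hcd]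
  refine integral_integral_swap ?_
  rwa [Measure.prod_restrict]

lemma integral_integral_pderivXWithin_add_pderivTWithin {a b c d : ℝ} (hab : a < b) (hcd : c < d)
    {E G : ℝ × ℝ → ℝ} (hE : ContDiffOn ℝ 1 E (Icc a b ×ˢ Icc c d))
    (hG : ContDiffOn ℝ 1 G (Icc a b ×ˢ Icc c d)) :
    ∫ x in a..b, ∫ t in c..d, (pderivXWithin (Icc a b ×ˢ Icc c d) G (x, t)
        + pderivTWithin (Icc a b ×ˢ Icc c d) E (x, t))
      = (((∫ x in a..b, E (x, d)) - ∫ x in a..b, E (x, c)) + ∫ t in c..d, G (b, t))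
        - ∫ t in c..d, G (a, t) := by
  set R := Icc a b ×ˢ Icc c d
  have hR : UniqueDiffOn ℝ R := (uniqueDiffOn_Icc hab).prod (uniqueDiffOn_Icc hcd)
  have hderiv : ∀ {F : ℝ × ℝ → ℝ}, ContDiffOn ℝ 1 F R →
      ∀ p ∈ Ioo (min a b) (max a b) ×ˢ Ioo (min c d) (max c d),
      HasFDerivAt F (fderivWithin ℝ F R p) p := fun hF p hp => by
    rw [min_eq_left hab.le, max_eq_right hab.le, min_eq_left hcd.le, max_eq_right hcd.le] at hp
    have hp : R ∈ 𝓝 p :=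
      prod_mem_nhds (Icc_mem_nhds hp.1.1 hp.1.2) (Icc_mem_nhds hp.2.1 hp.2.2)
    exact (hF.differentiableOn one_ne_zero _ (mem_of_mem_nhds hp)).hasFDerivWithinAt.hasFDerivAt hp
  have hR' : uIcc a b ×ˢ uIcc c d = R := by rw [uIcc_of_le hab.le, uIcc_of_le hcd.le]
  refine integral2_divergence_prod_of_hasFDerivAt G E _ _ a c b d
    (hR' ▸ hG.continuousOn) (hR' ▸ hE.continuousOn) (hderiv hG) (hderiv hE) ?_
  rw [hR']
  exact (((hG.continuousOn_fderivWithin hR le_rfl).clm_apply continuousOn_const).add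
    ((hE.continuousOn_fderivWithin hR le_rfl).clm_apply continuousOn_const)).integrableOn_compact
    (isCompact_Icc.prod isCompact_Icc)

lemma integral_add_integral_dissipation_eq_of_local_balance {a b c d : ℝ} (hab : a < b)
    (hcd : c ≤ d) {E G D : ℝ × ℝ → ℝ} (hE : ContDiffOn ℝ 1 E (Icc a b ×ˢ Icc c d))
    (hG : ContDiffOn ℝ 1 G (Icc a b ×ˢ Icc c d)) (hD : ContinuousOn D (Icc a b ×ˢ Icc c d))
    (hbal : ∀ x ∈ Ioo a b, ∀ t ∈ Ioo c d,
      deriv (fun y => G (y, t)) x + deriv (fun s => E (x, s)) t + D (x, t) = 0)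
    (hGa : ∀ t ∈ Icc c d, G (a, t) = 0) (hGb : ∀ t ∈ Icc c d, G (b, t) = 0) :
    (∫ x in a..b, E (x, d)) + (∫ t in c..d, ∫ x in a..b, D (x, t)) = ∫ x in a..b, E (x, c) := by
  rcases hcd.eq_or_lt with rfl | hcd
  · simp
  have hdiv_eq : ∀ x ∈ Ioo a b, ∀ t ∈ Ioo c d, pderivXWithin (Icc a b ×ˢ Icc c d) G (x, t)
      + pderivTWithin (Icc a b ×ˢ Icc c d) E (x, t) = -D (x, t) := by
    intro x hx t ht
    rw [← ((hG.differentiableOn one_ne_zero).hasDerivAt_pderivXWithin hx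
        (Ioo_subset_Icc_self ht)).deriv,
      ← ((hE.differentiableOn one_ne_zero).hasDerivAt_pderivTWithin (Ioo_subset_Icc_self hx)
        ht).deriv]
    linarith [hbal x hx t ht]
  have hG_zero : ∀ z, (∀ t ∈ Icc c d, G (z, t) = 0) → ∫ t in c..d, G (z, t) = 0 :=
    fun z hz => by
      rw [intervalIntegral.integral_congr (g := fun _ => 0) fun t ht =>
        hz t (uIcc_of_le hcd.le ▸ ht), intervalIntegral.integral_zero]
  have hdiv := integral_integral_pderivXWithin_add_pderivTWithin hab hcd hE hG
  rw [intervalIntegral.integral_congr_Ioo_of_le hab.le fun x hx =>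
      intervalIntegral.integral_congr_Ioo_of_le hcd.le fun t ht => hdiv_eq x hx t ht,
    hG_zero a hGa, hG_zero b hGb] at hdiv
  simp only [intervalIntegral.integral_neg] at hdiv
  rw [intervalIntegral_integral_swap_of_continuousOn hab.le hcd.le hD] at hdiv
  linarith

section BDEntropy

variable {γ α ρb : ℝ}

/-- `ρ Ψ(ρ, ρ̄)`, with the division by `ρ` in `psi` cleared. -/
noncomputable def pressureEnergy (γ ρb r : ℝ) : ℝ :=
  (r ^ γ - ρb ^ γ - γ * ρb ^ (γ - 1) * (r - ρb)) / (γ - 1)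

/-- The densities of the energy–Bresch–Desjardins balance law as functions of the jet `r = ρ`,
`rx = ρ_x`, `v = u`, `vx = u_x`. -/
noncomputable def bdEnergy (γ α ρb r rx v : ℝ) : ℝ :=
  α / 2 * r * (v + r ^ (α - 2) * rx) ^ 2 + 1 / 2 * r * v ^ 2 + (α + 1) * pressureEnergy γ ρb r

noncomputable def bdFlux (γ α ρb r rx v vx : ℝ) : ℝ :=
  v * (bdEnergy γ α ρb r rx v + (α + 1) * (r ^ γ - ρb ^ γ) - r ^ α * vx)

noncomputable def bdDissipation (γ α r rx vx : ℝ) : ℝ :=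
  r ^ α * vx ^ 2 + α * γ * r ^ (γ + α - 3) * rx ^ 2

lemma mul_psi {r : ℝ} (hr : r ≠ 0) : r * psi γ r ρb = pressureEnergy γ ρb r := by
  unfold psi pressureEnergy
  field_simp

lemma rpow_sub_one_mul_self {r : ℝ} (hr : r ≠ 0) (e : ℝ) : r ^ (e - 1) * r = r ^ e := by
  rw [← rpow_add_one hr, sub_add_cancel]

theorem bdEnergy_local_balance {x t ρt ρxt ρxx ut uxx : ℝ} {ρ ρx u ux : ℝ × ℝ → ℝ}
    (hγ : 1 < γ) (hpos : 0 < ρ (x, t))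
    (hρ_x : HasDerivAt (fun y => ρ (y, t)) (ρx (x, t)) x)
    (hρ_t : HasDerivAt (fun s => ρ (x, s)) ρt t)
    (hρx_x : HasDerivAt (fun y => ρx (y, t)) ρxx x)
    (hρx_t : HasDerivAt (fun s => ρx (x, s)) ρxt t)
    (hu_x : HasDerivAt (fun y => u (y, t)) (ux (x, t)) x)
    (hu_t : HasDerivAt (fun s => u (x, s)) ut t)
    (hux_x : HasDerivAt (fun y => ux (y, t)) uxx x)
    (hmass : ρt + (ρx (x, t) * u (x, t) + ρ (x, t) * ux (x, t)) = 0)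
    (hmass_x : ρxt + (ρxx * u (x, t) + 2 * ρx (x, t) * ux (x, t) + ρ (x, t) * uxx) = 0)
    (hmom : ρt * u (x, t) + ρ (x, t) * ut
      + (ρx (x, t) * u (x, t) ^ 2 + 2 * ρ (x, t) * u (x, t) * ux (x, t)
        + γ * ρ (x, t) ^ (γ - 1) * ρx (x, t))
      = α * ρ (x, t) ^ (α - 1) * ρx (x, t) * ux (x, t) + ρ (x, t) ^ α * uxx) :
    deriv (fun y => bdFlux γ α ρb (ρ (y, t)) (ρx (y, t)) (u (y, t)) (ux (y, t))) x
      + deriv (fun s => bdEnergy γ α ρb (ρ (x, s)) (ρx (x, s)) (u (x, s))) t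
      + bdDissipation γ α (ρ (x, t)) (ρx (x, t)) (ux (x, t)) = 0 := by
  have hr : ρ (x, t) ≠ 0 := hpos.ne'
  rw [show deriv (fun s => bdEnergy γ α ρb (ρ (x, s)) (ρx (x, s)) (u (x, s))) t = _ from
    (((hρ_t.const_mul _).mul
      ((hu_t.add ((hρ_t.rpow_const (p := α - 2) (Or.inl hr)).mul hρx_t)).pow 2)
      |>.add ((hρ_t.const_mul _).mul (hu_t.pow 2))).add
      (((((hρ_t.rpow_const (p := γ) (Or.inl hr)).sub_const _).sub
        ((hρ_t.sub_const _).const_mul _)).div_const _).const_mul _)).deriv]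
  rw [show deriv (fun y => bdFlux γ α ρb (ρ (y, t)) (ρx (y, t)) (u (y, t)) (ux (y, t))) x = _ from
    (hu_x.mul (((((hρ_x.const_mul _).mul
      ((hu_x.add ((hρ_x.rpow_const (p := α - 2) (Or.inl hr)).mul hρx_x)).pow 2)
      |>.add ((hρ_x.const_mul _).mul (hu_x.pow 2))).add
      (((((hρ_x.rpow_const (p := γ) (Or.inl hr)).sub_const _).sub
        ((hρ_x.sub_const _).const_mul _)).div_const _).const_mul _)).add
      (((hρ_x.rpow_const (p := γ) (Or.inl hr)).sub_const _).const_mul _)).sub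
      ((hρ_x.rpow_const (p := α) (Or.inl hr)).mul hux_x))).deriv]
  have hρt : ρt = -(ρx (x, t) * u (x, t) + ρ (x, t) * ux (x, t)) := by linarith
  have hρxt : ρxt = -(ρxx * u (x, t) + 2 * ρx (x, t) * ux (x, t) + ρ (x, t) * uxx) := by linarith
  have hut : ut = (α * ρ (x, t) ^ (α - 1) * ρx (x, t) * ux (x, t) + ρ (x, t) ^ α * uxx
      - u (x, t) * ρt - (ρx (x, t) * u (x, t) ^ 2 + 2 * ρ (x, t) * u (x, t) * ux (x, t)
        + γ * ρ (x, t) ^ (γ - 1) * ρx (x, t))) / ρ (x, t) := by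
    field_simp
    linarith
  have hb : ρb ^ γ = ρb ^ (γ - 1) * ρb := by
    rcases eq_or_ne ρb 0 with h0 | h0
    · simp [h0, zero_rpow (by linarith : γ ≠ 0)]
    · rw [rpow_sub_one_mul_self h0]
  have hg : γ - 1 ≠ 0 := by linarith
  simp only [Pi.add_apply, Pi.mul_apply, Pi.pow_apply, Pi.sub_apply, bdDissipation]
  rw [hut, hρxt, hρt, hb]
  -- Every power of `ρ` becomes `ρ ^ (α - 2 - 1)` or `ρ ^ (γ - 1)` times a power of `ρ`, so that
  -- the identity is polynomial in these atoms.
  rw [← rpow_sub_one_mul_self hr (γ + α - 3), show γ + α - 3 - 1 = (γ - 1) + (α - 2 - 1) by ring,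
    rpow_add hpos, ← rpow_sub_one_mul_self hr γ, ← rpow_sub_one_mul_self hr α,
    ← rpow_sub_one_mul_self hr (α - 1), show α - 1 - 1 = α - 2 by ring,
    ← rpow_sub_one_mul_self hr (α - 2)]
  push_cast
  field_simp
  ring

end BDEntropy

section Fields

variable {γ α ρb : ℝ} {S : Set (ℝ × ℝ)} {ρ u : ℝ × ℝ → ℝ}

noncomputable def bdEnergyField (γ α ρb : ℝ) (S : Set (ℝ × ℝ)) (ρ u : ℝ × ℝ → ℝ)
    (p : ℝ × ℝ) : ℝ :=
  bdEnergy γ α ρb (ρ p) (pderivXWithin S ρ p) (u p)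

noncomputable def bdFluxField (γ α ρb : ℝ) (S : Set (ℝ × ℝ)) (ρ u : ℝ × ℝ → ℝ)
    (p : ℝ × ℝ) : ℝ :=
  bdFlux γ α ρb (ρ p) (pderivXWithin S ρ p) (u p) (pderivXWithin S u p)

noncomputable def bdDissipationField (γ α : ℝ) (S : Set (ℝ × ℝ)) (ρ u : ℝ × ℝ → ℝ)
    (p : ℝ × ℝ) : ℝ :=
  bdDissipation γ α (ρ p) (pderivXWithin S ρ p) (pderivXWithin S u p)

lemma contDiffOn_bdEnergyField (hS : UniqueDiffOn ℝ S) (hρ : ContDiffOn ℝ 2 ρ S)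
    (hu : ContDiffOn ℝ 1 u S) (hpos : ∀ p ∈ S, ρ p ≠ 0) :
    ContDiffOn ℝ 1 (bdEnergyField γ α ρb S ρ u) S := by
  have hρx := hρ.pderivXWithin hS (m := 1) le_rfl
  have hρ1 : ContDiffOn ℝ 1 ρ S := hρ.of_le (by norm_num)
  unfold bdEnergyField bdEnergy pressureEnergy
  fun_prop (disch := assumption)

lemma contDiffOn_bdFluxField (hS : UniqueDiffOn ℝ S) (hρ : ContDiffOn ℝ 2 ρ S)
    (hu : ContDiffOn ℝ 2 u S) (hpos : ∀ p ∈ S, ρ p ≠ 0) :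
    ContDiffOn ℝ 1 (bdFluxField γ α ρb S ρ u) S := by
  have hρx := hρ.pderivXWithin hS (m := 1) le_rfl
  have hux := hu.pderivXWithin hS (m := 1) le_rfl
  have hρ1 : ContDiffOn ℝ 1 ρ S := hρ.of_le (by norm_num)
  have hu1 : ContDiffOn ℝ 1 u S := hu.of_le (by norm_num)
  unfold bdFluxField bdFlux bdEnergy pressureEnergy
  fun_prop (disch := assumption)

lemma continuousOn_bdDissipationField (hS : UniqueDiffOn ℝ S) (hρ : ContDiffOn ℝ 1 ρ S)
    (hu : ContDiffOn ℝ 1 u S) (hpos : ∀ p ∈ S, ρ p ≠ 0) :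
    ContinuousOn (bdDissipationField γ α S ρ u) S := by
  have hρx := hρ.pderivXWithin hS (m := 0) le_rfl
  have hux := hu.pderivXWithin hS (m := 0) le_rfl
  have hρ0 : ContDiffOn ℝ 0 ρ S := hρ.of_le (by norm_num)
  refine ContDiffOn.continuousOn (𝕜 := ℝ) (n := 0) ?_
  unfold bdDissipationField bdDissipation
  fun_prop (disch := assumption)

end Fields

section NavierStokesOnRectangle

variable {γ α ρb a b c d x t : ℝ} {ρ u : ℝ → ℝ → ℝ}

lemma pderivX_eq_pderivXWithin {f : ℝ → ℝ → ℝ}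
    (hf : DifferentiableOn ℝ (uncurry f) (Icc a b ×ˢ Icc c d)) (hx : x ∈ Ioo a b)
    (ht : t ∈ Icc c d) : pderivX f x t = pderivXWithin (Icc a b ×ˢ Icc c d) (uncurry f) (x, t) :=
  (hf.hasDerivAt_pderivXWithin hx ht).deriv

lemma mass_equation_interior (hρ : DifferentiableOn ℝ (uncurry ρ) (Icc a b ×ˢ Icc c d))
    (hu : DifferentiableOn ℝ (uncurry u) (Icc a b ×ˢ Icc c d))
    (hmass : ∀ x ∈ Icc a b, ∀ t ∈ Icc c d,
      pderivT ρ x t + pderivX (fun y s => ρ y s * u y s) x t = 0)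
    (hx : x ∈ Ioo a b) (ht : t ∈ Ioo c d) :
    pderivTWithin (Icc a b ×ˢ Icc c d) (uncurry ρ) (x, t)
      + (pderivXWithin (Icc a b ×ˢ Icc c d) (uncurry ρ) (x, t) * u x t
        + ρ x t * pderivXWithin (Icc a b ×ˢ Icc c d) (uncurry u) (x, t)) = 0 := by
  have ht' := Ioo_subset_Icc_self ht
  have h := hmass x (Ioo_subset_Icc_self hx) t ht'
  rwa [show pderivT ρ x t = _ from (hρ.hasDerivAt_pderivTWithin (Ioo_subset_Icc_self hx) ht).deriv,
    show pderivX (fun y s => ρ y s * u y s) x t = _ from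
      ((hρ.hasDerivAt_pderivXWithin hx ht').mul (hu.hasDerivAt_pderivXWithin hx ht')).deriv] at h

lemma mass_equation_deriv_x_interior (hρ : ContDiffOn ℝ 2 (uncurry ρ) (Icc a b ×ˢ Icc c d))
    (hu : ContDiffOn ℝ 2 (uncurry u) (Icc a b ×ˢ Icc c d))
    (hmass : ∀ x ∈ Icc a b, ∀ t ∈ Icc c d,
      pderivT ρ x t + pderivX (fun y s => ρ y s * u y s) x t = 0)
    (hx : x ∈ Ioo a b) (ht : t ∈ Ioo c d) :
    pderivTWithin (Icc a b ×ˢ Icc c d) (pderivXWithin (Icc a b ×ˢ Icc c d) (uncurry ρ)) (x, t)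
      + (pderivXWithin (Icc a b ×ˢ Icc c d) (pderivXWithin (Icc a b ×ˢ Icc c d) (uncurry ρ))
          (x, t) * u x t
        + 2 * pderivXWithin (Icc a b ×ˢ Icc c d) (uncurry ρ) (x, t)
          * pderivXWithin (Icc a b ×ˢ Icc c d) (uncurry u) (x, t)
        + ρ x t * pderivXWithin (Icc a b ×ˢ Icc c d)
          (pderivXWithin (Icc a b ×ˢ Icc c d) (uncurry u)) (x, t)) = 0 := by
  set R := Icc a b ×ˢ Icc c d
  have hR : UniqueDiffOn ℝ R :=
    (uniqueDiffOn_Icc (hx.1.trans hx.2)).prod (uniqueDiffOn_Icc (ht.1.trans ht.2))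
  have ht' := Ioo_subset_Icc_self ht
  have hρD := hρ.differentiableOn two_ne_zero
  have huD := hu.differentiableOn two_ne_zero
  have hderiv := (((hρ.pderivTWithin hR (m := 1) le_rfl).differentiableOn one_ne_zero
      |>.hasDerivAt_pderivXWithin hx ht').add
    ((((hρ.pderivXWithin hR (m := 1) le_rfl).differentiableOn one_ne_zero
      |>.hasDerivAt_pderivXWithin hx ht').mul (huD.hasDerivAt_pderivXWithin hx ht')).add
    ((hρD.hasDerivAt_pderivXWithin hx ht').mul
      ((hu.pderivXWithin hR (m := 1) le_rfl).differentiableOn one_ne_zero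
        |>.hasDerivAt_pderivXWithin hx ht'))))
  -- The mass equation holds on a neighbourhood of `x`, so its `x`-derivative vanishes.
  have hzero := hderiv.unique ((hasDerivAt_const x (0 : ℝ)).congr_of_eventuallyEq
    (eventually_of_mem (Ioo_mem_nhds hx.1 hx.2) fun y hy =>
      mass_equation_interior hρD huD hmass hy ht))
  rw [pderivXWithin_pderivTWithin_comm hρ (prod_mem_nhds (Icc_mem_nhds hx.1 hx.2)
    (Icc_mem_nhds ht.1 ht.2))] at hzero
  simp only [uncurry_apply_pair] at hzero
  linarith

lemma momentum_equation_interior (hρ : ContDiffOn ℝ 2 (uncurry ρ) (Icc a b ×ˢ Icc c d))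
    (hu : ContDiffOn ℝ 2 (uncurry u) (Icc a b ×ˢ Icc c d)) (hpos : 0 < ρ x t)
    (hmom : ∀ x ∈ Icc a b, ∀ t ∈ Icc c d,
      pderivT (fun y s => ρ y s * u y s) x t
        + pderivX (fun y s => ρ y s * u y s ^ 2 + ρ y s ^ γ) x t
        = pderivX (fun y s => ρ y s ^ α * pderivX u y s) x t)
    (hx : x ∈ Ioo a b) (ht : t ∈ Ioo c d) :
    pderivTWithin (Icc a b ×ˢ Icc c d) (uncurry ρ) (x, t) * u x t
        + ρ x t * pderivTWithin (Icc a b ×ˢ Icc c d) (uncurry u) (x, t)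
      + (pderivXWithin (Icc a b ×ˢ Icc c d) (uncurry ρ) (x, t) * u x t ^ 2
        + 2 * ρ x t * u x t * pderivXWithin (Icc a b ×ˢ Icc c d) (uncurry u) (x, t)
        + γ * ρ x t ^ (γ - 1) * pderivXWithin (Icc a b ×ˢ Icc c d) (uncurry ρ) (x, t))
      = α * ρ x t ^ (α - 1) * pderivXWithin (Icc a b ×ˢ Icc c d) (uncurry ρ) (x, t)
          * pderivXWithin (Icc a b ×ˢ Icc c d) (uncurry u) (x, t)
        + ρ x t ^ α * pderivXWithin (Icc a b ×ˢ Icc c d)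
          (pderivXWithin (Icc a b ×ˢ Icc c d) (uncurry u)) (x, t) := by
  have hR : UniqueDiffOn ℝ (Icc a b ×ˢ Icc c d) :=
    (uniqueDiffOn_Icc (hx.1.trans hx.2)).prod (uniqueDiffOn_Icc (ht.1.trans ht.2))
  have hx' := Ioo_subset_Icc_self hx
  have ht' := Ioo_subset_Icc_self ht
  have hρD := hρ.differentiableOn two_ne_zero
  have huD := hu.differentiableOn two_ne_zero
  have hρ_x := hρD.hasDerivAt_pderivXWithin hx ht'
  have hu_x := huD.hasDerivAt_pderivXWithin hx ht'
  have hux_x := ((hu.pderivXWithin hR (m := 1) le_rfl).differentiableOn one_ne_zero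
    ).hasDerivAt_pderivXWithin hx ht'
  have hviscous := ((hρ_x.rpow_const (p := α) (Or.inl hpos.ne')).mul hux_x).congr_of_eventuallyEq
    (f₁ := fun y => ρ y t ^ α * pderivX u y t) (eventually_of_mem (Ioo_mem_nhds hx.1 hx.2)
      fun y hy => by simp only [Pi.mul_apply, pderivX_eq_pderivXWithin huD hy ht']; rfl)
  have h := hmom x hx' t ht'
  rw [show pderivT (fun y s => ρ y s * u y s) x t = _ from
      ((hρD.hasDerivAt_pderivTWithin hx' ht).mul (huD.hasDerivAt_pderivTWithin hx' ht)).deriv,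
    show pderivX (fun y s => ρ y s * u y s ^ 2 + ρ y s ^ γ) x t = _ from
      ((hρ_x.mul (hu_x.pow 2)).add (hρ_x.rpow_const (p := γ) (Or.inl hpos.ne'))).deriv,
    show pderivX (fun y s => ρ y s ^ α * pderivX u y s) x t = _ from hviscous.deriv] at h
  simp only [uncurry_apply_pair, Pi.pow_apply] at h
  linear_combination h

lemma bdEnergyField_local_balance (hγ : 1 < γ)
    (hρ : ContDiffOn ℝ 2 (uncurry ρ) (Icc a b ×ˢ Icc c d))
    (hu : ContDiffOn ℝ 2 (uncurry u) (Icc a b ×ˢ Icc c d))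
    (hpos : ∀ x ∈ Icc a b, ∀ t ∈ Icc c d, 0 < ρ x t)
    (hmass : ∀ x ∈ Icc a b, ∀ t ∈ Icc c d,
      pderivT ρ x t + pderivX (fun y s => ρ y s * u y s) x t = 0)
    (hmom : ∀ x ∈ Icc a b, ∀ t ∈ Icc c d,
      pderivT (fun y s => ρ y s * u y s) x t
        + pderivX (fun y s => ρ y s * u y s ^ 2 + ρ y s ^ γ) x t
        = pderivX (fun y s => ρ y s ^ α * pderivX u y s) x t)
    (hx : x ∈ Ioo a b) (ht : t ∈ Ioo c d) :
    deriv (fun y => bdFluxField γ α ρb (Icc a b ×ˢ Icc c d) (uncurry ρ) (uncurry u) (y, t)) x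
      + deriv (fun s => bdEnergyField γ α ρb (Icc a b ×ˢ Icc c d) (uncurry ρ) (uncurry u) (x, s)) t
      + bdDissipationField γ α (Icc a b ×ˢ Icc c d) (uncurry ρ) (uncurry u) (x, t) = 0 := by
  have hR : UniqueDiffOn ℝ (Icc a b ×ˢ Icc c d) :=
    (uniqueDiffOn_Icc (hx.1.trans hx.2)).prod (uniqueDiffOn_Icc (ht.1.trans ht.2))
  have hx' := Ioo_subset_Icc_self hx
  have ht' := Ioo_subset_Icc_self ht
  have hρD := hρ.differentiableOn two_ne_zero
  have huD := hu.differentiableOn two_ne_zero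
  have hρxD := (hρ.pderivXWithin hR (m := 1) le_rfl).differentiableOn one_ne_zero
  have huxD := (hu.pderivXWithin hR (m := 1) le_rfl).differentiableOn one_ne_zero
  exact bdEnergy_local_balance hγ (hpos x hx' t ht')
    (hρD.hasDerivAt_pderivXWithin hx ht') (hρD.hasDerivAt_pderivTWithin hx' ht)
    (hρxD.hasDerivAt_pderivXWithin hx ht') (hρxD.hasDerivAt_pderivTWithin hx' ht)
    (huD.hasDerivAt_pderivXWithin hx ht') (huD.hasDerivAt_pderivTWithin hx' ht)
    (huxD.hasDerivAt_pderivXWithin hx ht')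
    (mass_equation_interior hρD huD hmass hx ht) (mass_equation_deriv_x_interior hρ hu hmass hx ht)
    (momentum_equation_interior hρ hu (hpos x hx' t ht') hmom hx ht)

lemma bdEnergyField_eq_of_mem_Ioo (hρ : DifferentiableOn ℝ (uncurry ρ) (Icc a b ×ˢ Icc c d))
    (hpos : ρ x t ≠ 0) (hx : x ∈ Ioo a b) (ht : t ∈ Icc c d) :
    bdEnergyField γ α ρb (Icc a b ×ˢ Icc c d) (uncurry ρ) (uncurry u) (x, t)
      = α / 2 * ρ x t * (u x t + ρ x t ^ (α - 2) * pderivX ρ x t) ^ 2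
        + 1 / 2 * ρ x t * u x t ^ 2 + (α + 1) * ρ x t * psi γ (ρ x t) ρb := by
  rw [mul_assoc (α + 1), mul_psi hpos, pderivX_eq_pderivXWithin hρ hx ht]
  rfl

lemma bdDissipationField_eq_of_mem_Ioo (hρ : DifferentiableOn ℝ (uncurry ρ) (Icc a b ×ˢ Icc c d))
    (hu : DifferentiableOn ℝ (uncurry u) (Icc a b ×ˢ Icc c d))
    (hx : x ∈ Ioo a b) (ht : t ∈ Icc c d) :
    bdDissipationField γ α (Icc a b ×ˢ Icc c d) (uncurry ρ) (uncurry u) (x, t)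
      = ρ x t ^ α * pderivX u x t ^ 2 + α * γ * ρ x t ^ (γ + α - 3) * pderivX ρ x t ^ 2 := by
  rw [pderivX_eq_pderivXWithin hρ hx ht, pderivX_eq_pderivXWithin hu hx ht]
  rfl

lemma integral_bdEnergyField_add_integral_bdDissipationField (hγ : 1 < γ) (hab : a < b)
    (hcd : c < d) (hρ : ContDiffOn ℝ 2 (uncurry ρ) (Icc a b ×ˢ Icc c d))
    (hu : ContDiffOn ℝ 2 (uncurry u) (Icc a b ×ˢ Icc c d))
    (hpos : ∀ x ∈ Icc a b, ∀ t ∈ Icc c d, 0 < ρ x t)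
    (hmass : ∀ x ∈ Icc a b, ∀ t ∈ Icc c d,
      pderivT ρ x t + pderivX (fun y s => ρ y s * u y s) x t = 0)
    (hmom : ∀ x ∈ Icc a b, ∀ t ∈ Icc c d,
      pderivT (fun y s => ρ y s * u y s) x t
        + pderivX (fun y s => ρ y s * u y s ^ 2 + ρ y s ^ γ) x t
        = pderivX (fun y s => ρ y s ^ α * pderivX u y s) x t)
    (hbc : ∀ t ∈ Icc c d, u a t = 0 ∧ u b t = 0) (ht : t ∈ Icc c d) :
    (∫ x in a..b, bdEnergyField γ α ρb (Icc a b ×ˢ Icc c d) (uncurry ρ) (uncurry u) (x, t))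
      + (∫ s in c..t, ∫ x in a..b,
          bdDissipationField γ α (Icc a b ×ˢ Icc c d) (uncurry ρ) (uncurry u) (x, s))
      = ∫ x in a..b, bdEnergyField γ α ρb (Icc a b ×ˢ Icc c d) (uncurry ρ) (uncurry u) (x, c) := by
  have hR : UniqueDiffOn ℝ (Icc a b ×ˢ Icc c d) :=
    (uniqueDiffOn_Icc hab).prod (uniqueDiffOn_Icc hcd)
  have hsub : Icc a b ×ˢ Icc c t ⊆ Icc a b ×ˢ Icc c d :=
    prod_mono subset_rfl (Icc_subset_Icc le_rfl ht.2)
  have hne : ∀ p ∈ Icc a b ×ˢ Icc c d, uncurry ρ p ≠ 0 := fun p hp =>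
    (hpos p.1 hp.1 p.2 hp.2).ne'
  refine integral_add_integral_dissipation_eq_of_local_balance hab ht.1
    ((contDiffOn_bdEnergyField hR hρ (hu.of_le (by norm_num)) hne).mono hsub)
    ((contDiffOn_bdFluxField hR hρ hu hne).mono hsub)
    ((continuousOn_bdDissipationField hR (hρ.of_le (by norm_num)) (hu.of_le (by norm_num))
      hne).mono hsub)
    (fun x hx s hs => bdEnergyField_local_balance hγ hρ hu hpos hmass hmom hx
      ⟨hs.1, hs.2.trans_le ht.2⟩)
    (fun s hs => by simp [bdFluxField, bdFlux, (hbc s ⟨hs.1, hs.2.trans ht.2⟩).1])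
    (fun s hs => by simp [bdFluxField, bdFlux, (hbc s ⟨hs.1, hs.2.trans ht.2⟩).2])

end NavierStokesOnRectangle

theorem stmt0_general (γ α ρb M T : ℝ) (hγ : 1 < γ)
    (hM : 0 < M) (hT : 0 < T) (ρ u : ℝ → ℝ → ℝ)
    (hρ : ContDiffOn ℝ 2 (fun p : ℝ × ℝ => ρ p.1 p.2)
      (Set.Icc (-M) M ×ˢ Set.Icc 0 T))
    (hu : ContDiffOn ℝ 2 (fun p : ℝ × ℝ => u p.1 p.2)
      (Set.Icc (-M) M ×ˢ Set.Icc 0 T))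
    (hpos : ∀ x ∈ Set.Icc (-M) M, ∀ t ∈ Set.Icc 0 T, 0 < ρ x t)
    (hmass : ∀ x ∈ Set.Icc (-M) M, ∀ t ∈ Set.Icc 0 T,
      pderivT ρ x t + pderivX (fun y s => ρ y s * u y s) x t = 0)
    (hmom : ∀ x ∈ Set.Icc (-M) M, ∀ t ∈ Set.Icc 0 T,
      pderivT (fun y s => ρ y s * u y s) x t
        + pderivX (fun y s => ρ y s * u y s ^ 2 + ρ y s ^ γ) x t
        = pderivX (fun y s => ρ y s ^ α * pderivX u y s) x t)
    (hbc : ∀ t ∈ Set.Icc 0 T, u (-M) t = 0 ∧ u M t = 0) :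
    ∀ t ∈ Set.Icc 0 T,
      (∫ x in (-M)..M,
        ((α / 2) * ρ x t * (u x t + ρ x t ^ (α - 2) * pderivX ρ x t) ^ 2
          + (1 / 2) * ρ x t * u x t ^ 2
          + (α + 1) * ρ x t * psi γ (ρ x t) ρb))
      + (∫ s in (0:ℝ)..t, ∫ x in (-M)..M,
          (ρ x s ^ α * (pderivX u x s) ^ 2
            + α * γ * ρ x s ^ (γ + α - 3) * (pderivX ρ x s) ^ 2))
      = ∫ x in (-M)..M,
          ((α / 2) * ρ x 0 * (u x 0 + ρ x 0 ^ (α - 2) * pderivX ρ x 0) ^ 2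
            + (1 / 2) * ρ x 0 * u x 0 ^ 2
            + (α + 1) * ρ x 0 * psi γ (ρ x 0) ρb) := by
  intro t ht
  have hab : -M < M := by linarith
  have hρD := hρ.differentiableOn two_ne_zero
  have hE : ∀ τ ∈ Icc 0 T, ∫ x in (-M)..M,
      ((α / 2) * ρ x τ * (u x τ + ρ x τ ^ (α - 2) * pderivX ρ x τ) ^ 2
        + (1 / 2) * ρ x τ * u x τ ^ 2 + (α + 1) * ρ x τ * psi γ (ρ x τ) ρb)
      = ∫ x in (-M)..M,
          bdEnergyField γ α ρb (Icc (-M) M ×ˢ Icc 0 T) (uncurry ρ) (uncurry u) (x, τ) :=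
    fun τ hτ => intervalIntegral.integral_congr_Ioo_of_le hab.le fun x hx =>
      (bdEnergyField_eq_of_mem_Ioo hρD (hpos x (Ioo_subset_Icc_self hx) τ hτ).ne' hx hτ).symm
  rw [hE t ht, hE 0 ⟨le_rfl, hT.le⟩, ← integral_bdEnergyField_add_integral_bdDissipationField
    hγ hab hT hρ hu hpos hmass hmom hbc ht]
  congr 1
  refine intervalIntegral.integral_congr fun s hs => ?_
  rw [uIcc_of_le ht.1] at hs
  exact intervalIntegral.integral_congr_Ioo_of_le hab.le fun x hx =>
    (bdDissipationField_eq_of_mem_Ioo hρD (hu.differentiableOn two_ne_zero) hx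
      ⟨hs.1, hs.2.trans ht.2⟩).symm

/-- The combined energy–Bresch–Desjardins entropy estimate (Lemma 3.1) in
identity form, for smooth positive solutions of the one-dimensional compressible
isentropic Navier–Stokes equations on `[−M, M] × [0, T]` with zero velocity
boundary conditions. -/
theorem stmt0 (γ α ρb M T : ℝ) (hγ : 1 < γ) (hα : 0 < α) (hρb : 0 ≤ ρb)
    (hM : 0 < M) (hT : 0 < T) (ρ u : ℝ → ℝ → ℝ)
    (hρ : ContDiffOn ℝ 2 (fun p : ℝ × ℝ => ρ p.1 p.2)
      (Set.Icc (-M) M ×ˢ Set.Icc 0 T))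
    (hu : ContDiffOn ℝ 2 (fun p : ℝ × ℝ => u p.1 p.2)
      (Set.Icc (-M) M ×ˢ Set.Icc 0 T))
    (hpos : ∀ x ∈ Set.Icc (-M) M, ∀ t ∈ Set.Icc 0 T, 0 < ρ x t)
    (hmass : ∀ x ∈ Set.Icc (-M) M, ∀ t ∈ Set.Icc 0 T,
      pderivT ρ x t + pderivX (fun y s => ρ y s * u y s) x t = 0)
    (hmom : ∀ x ∈ Set.Icc (-M) M, ∀ t ∈ Set.Icc 0 T,
      pderivT (fun y s => ρ y s * u y s) x t
        + pderivX (fun y s => ρ y s * u y s ^ 2 + ρ y s ^ γ) x t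
        = pderivX (fun y s => ρ y s ^ α * pderivX u y s) x t)
    (hbc : ∀ t ∈ Set.Icc 0 T, u (-M) t = 0 ∧ u M t = 0) :
    ∀ t ∈ Set.Icc 0 T,
      (∫ x in (-M)..M,
        ((α / 2) * ρ x t * (u x t + ρ x t ^ (α - 2) * pderivX ρ x t) ^ 2
          + (1 / 2) * ρ x t * u x t ^ 2
          + (α + 1) * ρ x t * psi γ (ρ x t) ρb))
      + (∫ s in (0:ℝ)..t, ∫ x in (-M)..M,
          (ρ x s ^ α * (pderivX u x s) ^ 2
            + α * γ * ρ x s ^ (γ + α - 3) * (pderivX ρ x s) ^ 2))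
      = ∫ x in (-M)..M,
          ((α / 2) * ρ x 0 * (u x 0 + ρ x 0 ^ (α - 2) * pderivX ρ x 0) ^ 2
            + (1 / 2) * ρ x 0 * u x 0 ^ 2
            + (α + 1) * ρ x 0 * psi γ (ρ x 0) ρb) :=
  stmt0_general γ α ρb M T hγ hM hT ρ u hρ hu hpos hmass hmom hbc
end

section
/- Let α > 0 and let U ⊆ ℝ × ℝ be open. Suppose ρ, u : U → ℝ are twice continuously differentiable, ρ > 0 on U, and the continuity equation ρ_t + (ρu)_x = 0 holds pointwise on U. Then at every point of U, ∂_x( ρ^α·u_x ) = −ρ·∂_t( ρ^{α−2}·ρ_x ) − ρ·u·∂_x( ρ^{α−2}·ρ_x ). -/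
/-!
Write `D = ∂_t + u ∂_x`. The continuity equation says `D ρ = -ρ u_x`; differentiating it in `x`
and using `ρ_tx = ρ_xt` gives `D ρ_x = -ρ u_xx - 2 ρ_x u_x`. Hence
`D (ρ^(α-2) ρ_x) = -ρ^(α-1) u_xx - α ρ^(α-2) ρ_x u_x`, and `-ρ` times this is
`ρ^α u_xx + α ρ^(α-1) ρ_x u_x = ∂_x (ρ^α u_x)`.
-/

open Real Topology Filter Function

section Slices

variable {E : Type*} [NormedAddCommGroup E] [NormedSpace ℝ E]
  {F : ℝ × ℝ → E} {L : ℝ × ℝ →L[ℝ] E} {x t : ℝ}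

lemma HasFDerivAt.hasDerivAt_prodMk_left (h : HasFDerivAt F L (x, t)) :
    HasDerivAt (fun y => F (y, t)) (L (1, 0)) x :=
  h.comp_hasDerivAt x ((hasDerivAt_id x).prodMk (hasDerivAt_const x t))

lemma HasFDerivAt.hasDerivAt_prodMk_right (h : HasFDerivAt F L (x, t)) :
    HasDerivAt (fun s => F (x, s)) (L (0, 1)) t :=
  h.comp_hasDerivAt t ((hasDerivAt_const t x).prodMk (hasDerivAt_id t))

end Slices

section PartialDerivatives

variable {F G : ℝ → ℝ → ℝ} {x t : ℝ}

lemma pderivX_eq_fderiv (h : DifferentiableAt ℝ (uncurry F) (x, t)) :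
    pderivX F x t = fderiv ℝ (uncurry F) (x, t) (1, 0) :=
  h.hasFDerivAt.hasDerivAt_prodMk_left.deriv

lemma pderivT_eq_fderiv (h : DifferentiableAt ℝ (uncurry F) (x, t)) :
    pderivT F x t = fderiv ℝ (uncurry F) (x, t) (0, 1) :=
  h.hasFDerivAt.hasDerivAt_prodMk_right.deriv

lemma hasDerivAt_pderivX (h : DifferentiableAt ℝ (uncurry F) (x, t)) :
    HasDerivAt (fun y => F y t) (pderivX F x t) x :=
  h.hasFDerivAt.hasDerivAt_prodMk_left.differentiableAt.hasDerivAt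

lemma hasDerivAt_pderivT (h : DifferentiableAt ℝ (uncurry F) (x, t)) :
    HasDerivAt (fun s => F x s) (pderivT F x t) t :=
  h.hasFDerivAt.hasDerivAt_prodMk_right.differentiableAt.hasDerivAt

lemma pderivX_mul (hF : DifferentiableAt ℝ (uncurry F) (x, t))
    (hG : DifferentiableAt ℝ (uncurry G) (x, t)) :
    pderivX (fun y s => F y s * G y s) x t = pderivX F x t * G x t + F x t * pderivX G x t :=
  ((hasDerivAt_pderivX hF).mul (hasDerivAt_pderivX hG)).deriv

lemma pderivX_rpow_mul {p : ℝ} (hF : DifferentiableAt ℝ (uncurry F) (x, t))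
    (hG : DifferentiableAt ℝ (uncurry G) (x, t)) (hF₀ : F x t ≠ 0) :
    pderivX (fun y s => F y s ^ p * G y s) x t =
      pderivX F x t * p * F x t ^ (p - 1) * G x t + F x t ^ p * pderivX G x t :=
  (((hasDerivAt_pderivX hF).rpow_const (.inl hF₀)).mul (hasDerivAt_pderivX hG)).deriv

lemma pderivT_rpow_mul {p : ℝ} (hF : DifferentiableAt ℝ (uncurry F) (x, t))
    (hG : DifferentiableAt ℝ (uncurry G) (x, t)) (hF₀ : F x t ≠ 0) :
    pderivT (fun y s => F y s ^ p * G y s) x t =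
      pderivT F x t * p * F x t ^ (p - 1) * G x t + F x t ^ p * pderivT G x t :=
  (((hasDerivAt_pderivT hF).rpow_const (.inl hF₀)).mul (hasDerivAt_pderivT hG)).deriv

lemma ContDiffOn.uncurry_pderivX {U : Set (ℝ × ℝ)} {m n : WithTop ℕ∞}
    (hF : ContDiffOn ℝ n (uncurry F) U) (hU : IsOpen U) (hmn : m + 1 ≤ n) :
    ContDiffOn ℝ m (uncurry (pderivX F)) U := by
  have hdiff : DifferentiableOn ℝ (uncurry F) U :=
    hF.differentiableOn (ne_bot_of_le_ne_bot one_ne_zero (le_of_add_le_right hmn))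
  refine ((hF.fderiv_of_isOpen hU hmn).clm_apply (contDiffOn_const (c := ((1 : ℝ), (0 : ℝ))))).congr fun p hp => ?_
  exact pderivX_eq_fderiv (hdiff.differentiableAt (hU.mem_nhds hp))

lemma pderivT_pderivX_eq_fderiv_fderiv (hF : ContDiffAt ℝ 2 (uncurry F) (x, t)) :
    pderivT (pderivX F) x t = fderiv ℝ (fderiv ℝ (uncurry F)) (x, t) (0, 1) (1, 0) := by
  have hdiff : ∀ᶠ s in 𝓝 t, DifferentiableAt ℝ (uncurry F) (x, s) :=
    (Continuous.prodMk_right x).continuousAt.eventually ((hF.eventually (by simp)).mono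
      fun _ hq => hq.differentiableAt (by simp))
  have hD2 := ((hF.fderiv_right (m := 1) (by norm_num)).differentiableAt one_ne_zero).hasFDerivAt
  refine HasDerivAt.deriv ?_
  refine ((hD2.hasDerivAt_prodMk_right.clm_apply (hasDerivAt_const t ((1 : ℝ), (0 : ℝ))))
    |>.congr_deriv (by simp)).congr_of_eventuallyEq ?_
  exact hdiff.mono fun s hs => pderivX_eq_fderiv hs

lemma pderivX_pderivT_eq_fderiv_fderiv (hF : ContDiffAt ℝ 2 (uncurry F) (x, t)) :
    pderivX (pderivT F) x t = fderiv ℝ (fderiv ℝ (uncurry F)) (x, t) (1, 0) (0, 1) := by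
  have hdiff : ∀ᶠ y in 𝓝 x, DifferentiableAt ℝ (uncurry F) (y, t) :=
    (Continuous.prodMk_left t).continuousAt.eventually ((hF.eventually (by simp)).mono
      fun _ hq => hq.differentiableAt (by simp))
  have hD2 := ((hF.fderiv_right (m := 1) (by norm_num)).differentiableAt one_ne_zero).hasFDerivAt
  refine HasDerivAt.deriv ?_
  refine ((hD2.hasDerivAt_prodMk_left.clm_apply (hasDerivAt_const x ((0 : ℝ), (1 : ℝ))))
    |>.congr_deriv (by simp)).congr_of_eventuallyEq ?_
  exact hdiff.mono fun y hy => pderivT_eq_fderiv hy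

lemma pderivT_pderivX_comm (hF : ContDiffAt ℝ 2 (uncurry F) (x, t)) :
    pderivT (pderivX F) x t = pderivX (pderivT F) x t := by
  rw [pderivT_pderivX_eq_fderiv_fderiv hF, pderivX_pderivT_eq_fderiv_fderiv hF]
  exact hF.isSymmSndFDerivAt (by simp) _ _

end PartialDerivatives

section ContinuityEquation

variable {U : Set (ℝ × ℝ)} {ρ u : ℝ → ℝ → ℝ} {x t : ℝ}

lemma pderivT_eq_of_continuity (hρ : DifferentiableAt ℝ (uncurry ρ) (x, t))
    (hu : DifferentiableAt ℝ (uncurry u) (x, t))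
    (hmass : pderivT ρ x t + pderivX (fun y s => ρ y s * u y s) x t = 0) :
    pderivT ρ x t = -(pderivX ρ x t * u x t + ρ x t * pderivX u x t) := by
  rw [← pderivX_mul hρ hu]
  linarith

lemma pderivT_pderivX_eq_of_continuity (hU : IsOpen U) (hρ : ContDiffOn ℝ 2 (uncurry ρ) U)
    (hu : ContDiffOn ℝ 2 (uncurry u) U)
    (hmass : ∀ x t, (x, t) ∈ U → pderivT ρ x t + pderivX (fun y s => ρ y s * u y s) x t = 0)
    (hxt : (x, t) ∈ U) :
    pderivT (pderivX ρ) x t = -(pderivX (pderivX ρ) x t * u x t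
      + 2 * pderivX ρ x t * pderivX u x t + ρ x t * pderivX (pderivX u) x t) := by
  have hd {F : ℝ → ℝ → ℝ} (hF : ContDiffOn ℝ 1 (uncurry F) U) {p : ℝ × ℝ} (hp : p ∈ U) :
      DifferentiableAt ℝ (uncurry F) p :=
    (hF.differentiableOn one_ne_zero p hp).differentiableAt (hU.mem_nhds hp)
  have hρ₁ : ContDiffOn ℝ 1 (uncurry ρ) U := hρ.of_le one_le_two
  have hu₁ : ContDiffOn ℝ 1 (uncurry u) U := hu.of_le one_le_two
  have hρx : ContDiffOn ℝ 1 (uncurry (pderivX ρ)) U := hρ.uncurry_pderivX hU (by norm_num)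
  have hux : ContDiffOn ℝ 1 (uncurry (pderivX u)) U := hu.uncurry_pderivX hU (by norm_num)
  have hmass_near : ∀ᶠ y in 𝓝 x,
      pderivT ρ y t = -(pderivX ρ y t * u y t + ρ y t * pderivX u y t) := by
    filter_upwards [(Continuous.prodMk_left t).continuousAt.preimage_mem_nhds (hU.mem_nhds hxt)]
      with y hy
    exact pderivT_eq_of_continuity (hd hρ₁ hy) (hd hu₁ hy) (hmass y t hy)
  have hderiv := ((((hasDerivAt_pderivX (hd hρx hxt)).mul (hasDerivAt_pderivX (hd hu₁ hxt))).add
    ((hasDerivAt_pderivX (hd hρ₁ hxt)).mul (hasDerivAt_pderivX (hd hux hxt)))).neg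
    ).congr_of_eventuallyEq hmass_near
  rw [pderivT_pderivX_comm (hρ.contDiffAt (hU.mem_nhds hxt)), pderivX, hderiv.deriv]
  ring

end ContinuityEquation

theorem stmt3_general (α : ℝ)
    (U : Set (ℝ × ℝ)) (hU : IsOpen U) (ρ u : ℝ → ℝ → ℝ)
    (hρ : ContDiffOn ℝ 2 (fun p : ℝ × ℝ => ρ p.1 p.2) U)
    (hu : ContDiffOn ℝ 2 (fun p : ℝ × ℝ => u p.1 p.2) U)
    (hpos : ∀ x t, (x, t) ∈ U → 0 < ρ x t)
    (hmass : ∀ x t, (x, t) ∈ U →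
      pderivT ρ x t + pderivX (fun y s => ρ y s * u y s) x t = 0) :
    ∀ x t, (x, t) ∈ U →
      pderivX (fun y s => ρ y s ^ α * pderivX u y s) x t =
        - ρ x t * pderivT (fun y s => ρ y s ^ (α - 2) * pderivX ρ y s) x t
        - ρ x t * u x t * pderivX (fun y s => ρ y s ^ (α - 2) * pderivX ρ y s) x t := by
  intro x t hxt
  have hd {F : ℝ → ℝ → ℝ} (hF : ContDiffOn ℝ 1 (uncurry F) U) :
      DifferentiableAt ℝ (uncurry F) (x, t) :=
    (hF.differentiableOn one_ne_zero _ hxt).differentiableAt (hU.mem_nhds hxt)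
  have hρ₁ : DifferentiableAt ℝ (uncurry ρ) (x, t) := hd (hρ.of_le one_le_two)
  have hu₁ : DifferentiableAt ℝ (uncurry u) (x, t) := hd (hu.of_le one_le_two)
  have hρx : DifferentiableAt ℝ (uncurry (pderivX ρ)) (x, t) :=
    hd (hρ.uncurry_pderivX hU (by norm_num))
  have hux : DifferentiableAt ℝ (uncurry (pderivX u)) (x, t) :=
    hd (hu.uncurry_pderivX hU (by norm_num))
  have hr : 0 < ρ x t := hpos x t hxt
  rw [pderivX_rpow_mul hρ₁ hux hr.ne', pderivT_rpow_mul hρ₁ hρx hr.ne',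
    pderivX_rpow_mul hρ₁ hρx hr.ne', pderivT_eq_of_continuity hρ₁ hu₁ (hmass x t hxt),
    pderivT_pderivX_eq_of_continuity hU hρ hu hmass hxt, rpow_sub_one hr.ne' (α - 2),
    rpow_sub_one hr.ne' α, rpow_sub hr α 2, rpow_two]
  field_simp
  ring

/-- The Bresch–Desjardins identity (2.2.28): using only the continuity equation,
`∂_x(ρ^α u_x) = −ρ·∂_t(ρ^{α−2}ρ_x) − ρu·∂_x(ρ^{α−2}ρ_x)`. -/
theorem stmt3 (α : ℝ) (hα : 0 < α)
    (U : Set (ℝ × ℝ)) (hU : IsOpen U) (ρ u : ℝ → ℝ → ℝ)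
    (hρ : ContDiffOn ℝ 2 (fun p : ℝ × ℝ => ρ p.1 p.2) U)
    (hu : ContDiffOn ℝ 2 (fun p : ℝ × ℝ => u p.1 p.2) U)
    (hpos : ∀ x t, (x, t) ∈ U → 0 < ρ x t)
    (hmass : ∀ x t, (x, t) ∈ U →
      pderivT ρ x t + pderivX (fun y s => ρ y s * u y s) x t = 0) :
    ∀ x t, (x, t) ∈ U →
      pderivX (fun y s => ρ y s ^ α * pderivX u y s) x t =
        - ρ x t * pderivT (fun y s => ρ y s ^ (α - 2) * pderivX ρ y s) x t
        - ρ x t * u x t * pderivX (fun y s => ρ y s ^ (α - 2) * pderivX ρ y s) x t :=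
  stmt3_general α U hU ρ u hρ hu hpos hmass
end

section
/- Let γ > 1, 0 < α < 1/2, ρ̄ > 0 and E > 0. There exists a constant C > 0, depending only on γ, α, ρ̄ and E, with the following property: if ρ : ℝ → ℝ is continuously differentiable, ρ(x) > 0 for all x, lim_{x→−∞} ρ(x) = ρ̄, ∫_ℝ ρ(x)·Ψ(ρ(x), ρ̄) dx ≤ E and ∫_ℝ ( (ρ^{α−1/2})'(x) )² dx ≤ E, then ρ(x) ≤ C for all x ∈ ℝ. -/
/-!
Put `w = ρ ^ (α - 1/2)`; as `α < 1/2`, large values of `ρ` are small values of `w`.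
By Cauchy–Schwarz, `(w y - w x)² ≤ (y - x) ∫ (w')² ≤ (y - x) E`, so if `ρ x₀` is very large,
`w` stays below `K ^ (α - 1/2)`, i.e. `ρ ≥ K`, on an interval of length `L ≍ K ^ (2α - 1) / E`.
There `ρ Ψ(ρ, ρ̄) ≥ K Ψ(K, ρ̄) ≳ K ^ γ`, so the energy is at least of order
`K ^ (γ + 2α - 1) / E`, which exceeds `E` for large `K` since `γ + 2α - 1 > 0`.
-/

open Real MeasureTheory Filter

noncomputable def relEnergy (γ ρb r : ℝ) : ℝ :=
  (r ^ γ - ρb ^ γ - γ * ρb ^ (γ - 1) * (r - ρb)) / (γ - 1)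

lemma mul_psi_eq_relEnergy {γ ρb r : ℝ} (hγ : γ ≠ 1) (hr : r ≠ 0) :
    r * psi γ r ρb = relEnergy γ ρb r := by
  have : γ - 1 ≠ 0 := sub_ne_zero.2 hγ
  unfold psi relEnergy
  field_simp

lemma rpow_add_mul_sub_le_rpow {p a b : ℝ} (hp : 1 ≤ p) (ha : 0 < a) (hb : 0 ≤ b) :
    a ^ p + p * a ^ (p - 1) * (b - a) ≤ b ^ p := by
  have hbern := one_add_mul_self_le_rpow_one_add
    (by linarith [div_nonneg hb ha.le] : (-1 : ℝ) ≤ b / a - 1) hp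
  rw [add_sub_cancel, div_rpow hb ha.le] at hbern
  have hap : 0 < a ^ p := rpow_pos_of_pos ha p
  calc a ^ p + p * a ^ (p - 1) * (b - a) = a ^ p * (1 + p * (b / a - 1)) := by
        rw [rpow_sub_one ha.ne']
        field_simp
    _ ≤ a ^ p * (b ^ p / a ^ p) := mul_le_mul_of_nonneg_left hbern hap.le
    _ = b ^ p := by field_simp

section RelEnergy

variable {γ ρb : ℝ}

lemma relEnergy_nonneg (hγ : 1 < γ) (hρb : 0 < ρb) {r : ℝ} (hr : 0 ≤ r) :
    0 ≤ relEnergy γ ρb r :=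
  div_nonneg (by linarith [rpow_add_mul_sub_le_rpow hγ.le hρb hr]) (by linarith)

lemma monotoneOn_relEnergy (hγ : 1 < γ) (hρb : 0 < ρb) :
    MonotoneOn (relEnergy γ ρb) (Set.Ici ρb) := by
  intro K hK r _ hKr
  have hK0 : 0 < K := hρb.trans_le hK
  have htangent := rpow_add_mul_sub_le_rpow hγ.le hK0 (hK0.le.trans hKr)
  have hslope : ρb ^ (γ - 1) ≤ K ^ (γ - 1) := rpow_le_rpow hρb.le hK (by linarith)
  refine div_le_div_of_nonneg_right ?_ (by linarith)
  nlinarith [mul_le_mul_of_nonneg_right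
    (mul_le_mul_of_nonneg_left hslope (by linarith : (0 : ℝ) ≤ γ)) (sub_nonneg.2 hKr)]

lemma eventually_rpow_div_le_relEnergy (hγ : 1 < γ) :
    ∀ᶠ K in atTop, K ^ γ / (2 * (γ - 1)) ≤ relEnergy γ ρb K := by
  let a := γ * ρb ^ (γ - 1)
  let c := a * ρb - ρb ^ γ
  filter_upwards [(tendsto_rpow_atTop (by linarith : 0 < γ - 1)).eventually_ge_atTop
      (2 * (|a| + |c|)), eventually_ge_atTop 1] with K hKpow hK1
  have hKγ : K ^ γ = K * K ^ (γ - 1) := by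
    rw [mul_comm, ← rpow_add_one (by linarith), sub_add_cancel]
  have hlin : 2 * (a * K - c) ≤ K ^ γ := by
    nlinarith [mul_le_mul_of_nonneg_left hKpow (by linarith : (0 : ℝ) ≤ K),
      mul_le_mul_of_nonneg_left (le_abs_self a) (by linarith : (0 : ℝ) ≤ K),
      mul_nonneg (sub_nonneg.2 hK1) (abs_nonneg c), neg_abs_le c]
  calc K ^ γ / (2 * (γ - 1)) = K ^ γ / 2 / (γ - 1) := by rw [div_div]
    _ ≤ relEnergy γ ρb K := div_le_div_of_nonneg_right (by linarith) (by linarith)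

lemma tendsto_relEnergy_mul_rpow_atTop (hγ : 1 < γ) {β : ℝ} (hβ : 0 < γ + β) :
    Tendsto (fun K => relEnergy γ ρb K * K ^ β) atTop atTop := by
  refine tendsto_atTop_mono' _ ?_ ((tendsto_rpow_atTop hβ).atTop_div_const
    (by linarith : (0 : ℝ) < 2 * (γ - 1)))
  filter_upwards [eventually_rpow_div_le_relEnergy hγ, eventually_gt_atTop 0] with K hK hK0
  rw [rpow_add hK0, mul_div_right_comm]
  exact mul_le_mul_of_nonneg_right hK (rpow_nonneg hK0.le β)

end RelEnergy

lemma sq_intervalIntegral_le_mul_intervalIntegral_sq {f : ℝ → ℝ} {a b : ℝ} (hab : a ≤ b)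
    (hf : IntervalIntegrable f volume a b)
    (hf2 : IntervalIntegrable (fun x => f x ^ 2) volume a b) :
    (∫ x in a..b, f x) ^ 2 ≤ (b - a) * ∫ x in a..b, f x ^ 2 := by
  rcases hab.eq_or_lt with rfl | hlt
  · simp
  set I := ∫ x in a..b, f x
  set c := I / (b - a)
  -- integrate `2 c f - c² ≤ f²` with `c` the mean value of `f`
  have h : ∫ x in a..b, (2 * c * f x - c ^ 2) ≤ ∫ x in a..b, f x ^ 2 :=
    intervalIntegral.integral_mono_on hab ((hf.const_mul _).sub intervalIntegrable_const) hf2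
      fun x _ => by nlinarith [sq_nonneg (f x - c)]
  rw [intervalIntegral.integral_sub (hf.const_mul _) intervalIntegrable_const,
    intervalIntegral.integral_const_mul, intervalIntegral.integral_const, smul_eq_mul] at h
  have hba : 0 < b - a := sub_pos.2 hlt
  have hmean : 2 * c * I - (b - a) * c ^ 2 = I ^ 2 / (b - a) := by
    simp only [c]
    field_simp
    ring
  rw [hmean, div_le_iff₀ hba] at h
  linarith

lemma sq_sub_le_mul_integral_deriv_sq {w : ℝ → ℝ} (hw : ContDiff ℝ 1 w)
    (hint : Integrable fun x => deriv w x ^ 2) {a b : ℝ} (hab : a ≤ b) :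
    (w b - w a) ^ 2 ≤ (b - a) * ∫ x, deriv w x ^ 2 := by
  have hcont : Continuous (deriv w) := hw.continuous_deriv le_rfl
  rw [← intervalIntegral.integral_deriv_eq_sub
    (fun x _ => (hw.differentiable one_ne_zero).differentiableAt) (hcont.intervalIntegrable a b)]
  refine (sq_intervalIntegral_le_mul_intervalIntegral_sq hab (hcont.intervalIntegrable a b)
    ((hcont.pow 2).intervalIntegrable a b)).trans (mul_le_mul_of_nonneg_left ?_ (by linarith))
  rw [intervalIntegral.integral_of_le hab]
  exact setIntegral_le_integral hint (ae_of_all _ fun _ => sq_nonneg _)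

lemma lt_of_rpow_lt_half {ρ : ℝ → ℝ} {m K E x₀ x : ℝ} (hm : m < 0) (hK : 0 < K)
    (hρ : ContDiff ℝ 1 ρ) (hpos : ∀ x, 0 < ρ x)
    (hint : Integrable fun x => deriv (fun y => ρ y ^ m) x ^ 2)
    (hE : ∫ x, deriv (fun y => ρ y ^ m) x ^ 2 ≤ E)
    (hx₀ : ρ x₀ ^ m < K ^ m / 2) (hx : x₀ ≤ x) (hxE : (x - x₀) * E ≤ (K ^ m / 2) ^ 2) :
    K < ρ x := by
  have hosc := sq_sub_le_mul_integral_deriv_sq (hρ.rpow_const_of_ne fun y => (hpos y).ne')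
    hint hx
  have hsq : (ρ x ^ m - ρ x₀ ^ m) ^ 2 ≤ (K ^ m / 2) ^ 2 :=
    hosc.trans ((mul_le_mul_of_nonneg_left hE (sub_nonneg.2 hx)).trans hxE)
  have hdiff := (abs_le_of_sq_le_sq' hsq (by positivity)).2
  rw [← rpow_lt_rpow_iff_of_neg (hpos x) hK hm]
  linarith

lemma mul_relEnergy_le_integral {γ ρb K a b : ℝ} {ρ : ℝ → ℝ} (hγ : 1 < γ) (hρb : 0 < ρb)
    (hpos : ∀ x, 0 < ρ x) (hint : Integrable fun x => ρ x * psi γ (ρ x) ρb)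
    (hK : ρb ≤ K) (hab : a ≤ b) (hρK : ∀ x ∈ Set.Icc a b, K ≤ ρ x) :
    (b - a) * relEnergy γ ρb K ≤ ∫ x, ρ x * psi γ (ρ x) ρb := by
  have hρψ : ∀ x, ρ x * psi γ (ρ x) ρb = relEnergy γ ρb (ρ x) :=
    fun x => mul_psi_eq_relEnergy hγ.ne' (hpos x).ne'
  have hlow := setIntegral_ge_of_const_le (c := relEnergy γ ρb K) measurableSet_Ioc
    measure_Ioc_lt_top.ne (fun x hx => (hρψ x).symm ▸ monotoneOn_relEnergy hγ hρb hK
      (hK.trans (hρK x (Set.Ioc_subset_Icc_self hx))) (hρK x (Set.Ioc_subset_Icc_self hx)))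
    hint.integrableOn
  rw [Real.volume_real_Ioc_of_le hab, smul_eq_mul] at hlow
  exact hlow.trans (setIntegral_le_integral hint (ae_of_all _ fun x =>
    (relEnergy_nonneg hγ hρb (hpos x).le).trans_eq (hρψ x).symm))

/-- Uniform upper bound for the density (Lemma 3.2, case `ρ̄ > 0`, `0 < α < 1/2`):
the energy and Bresch–Desjardins entropy bounds imply a uniform upper bound on `ρ`. -/
theorem stmt6 (γ α ρb E : ℝ) (hγ : 1 < γ) (hα0 : 0 < α) (hα : α < 1 / 2)
    (hρb : 0 < ρb) (hE : 0 < E) :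
    ∃ C > 0, ∀ ρ : ℝ → ℝ, ContDiff ℝ 1 ρ → (∀ x, 0 < ρ x) →
      Tendsto ρ atBot (nhds ρb) →
      Integrable (fun x => ρ x * psi γ (ρ x) ρb) →
      (∫ x, ρ x * psi γ (ρ x) ρb) ≤ E →
      Integrable (fun x => (deriv (fun y => ρ y ^ (α - 1 / 2)) x) ^ 2) →
      (∫ x, (deriv (fun y => ρ y ^ (α - 1 / 2)) x) ^ 2) ≤ E →
      ∀ x, ρ x ≤ C := by
  set m := α - 1 / 2 with hm_def
  have hm : m < 0 := by linarith
  obtain ⟨K, hKE, hρbK⟩ := (((tendsto_relEnergy_mul_rpow_atTop (ρb := ρb) hγ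
    (by linarith : 0 < γ + 2 * m)).eventually_gt_atTop (4 * E ^ 2)).and
    (eventually_ge_atTop ρb)).exists
  have hK : 0 < K := hρb.trans_le hρbK
  have hKm : 0 < K ^ m := rpow_pos_of_pos hK m
  set L := (K ^ m / 2) ^ 2 / E
  refine ⟨(K ^ m / 2) ^ m⁻¹, by positivity, ?_⟩
  intro ρ hρ hpos _ hint₁ hE₁ hint₂ hE₂ x₀
  by_contra! hx₀
  rw [rpow_inv_lt_iff_of_neg (by positivity) (hpos x₀) hm] at hx₀
  have hL : L * E = (K ^ m / 2) ^ 2 := div_mul_cancel₀ _ hE.ne'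
  have hρK : ∀ x ∈ Set.Icc x₀ (x₀ + L), K ≤ ρ x := fun x hx =>
    (lt_of_rpow_lt_half hm hK hρ hpos hint₂ hE₂ hx₀ hx.1
      (hL ▸ mul_le_mul_of_nonneg_right (by linarith [hx.2]) hE.le)).le
  have henergy := mul_relEnergy_le_integral hγ hρb hpos hint₁ hρbK
    (by linarith [show 0 ≤ L by positivity]) hρK
  rw [add_sub_cancel_left] at henergy
  have hK2m : K ^ (2 * m) = (K ^ m) ^ 2 := by
    rw [mul_comm, rpow_mul hK.le, rpow_two]
  have : 4 * E * (L * relEnergy γ ρb K) = relEnergy γ ρb K * K ^ (2 * m) := by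
    rw [hK2m]
    linear_combination (4 * relEnergy γ ρb K) * hL
  nlinarith
end

section
/- Let γ > 1, 0 < α < 1/2, ρ̄ > 0 and E > 0. There exists a constant c > 0, depending only on γ, α, ρ̄ and E, with the following property: if ρ : ℝ → ℝ is continuously differentiable, ρ(x) > 0 for all x, ∫_ℝ ρ(x)·Ψ(ρ(x), ρ̄) dx ≤ E and ∫_ℝ ( (ρ^{α−1/2})'(x) )² dx ≤ E, then ρ(x) ≥ c for all x ∈ ℝ. -/
/-!
With `p = α - 1/2 < 0` and `u = ρ ^ p`, the bound `|u'| ≤ (u'² + 1) / 2` shows that `u` moves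
by at most `(E + δ) / 2` over distance `δ`. So if `ρ(x₀)` is very small, `u` is large and hence
`ρ ≤ ρ̄ / 2` on the whole interval `[x₀ - δ, x₀ + δ]`. There `ρ Ψ(ρ, ρ̄)`, the gap between
`ρ ^ γ / (γ - 1)` and its tangent line at `ρ̄`, is at least a fixed `m > 0`; choosing `δ = E / m`
makes the energy at least `2E > E`.
-/

open Real MeasureTheory Filter

open Set

noncomputable def tangentGap (γ ρb t : ℝ) : ℝ :=
  t ^ γ - ρb ^ γ - γ * ρb ^ (γ - 1) * (t - ρb)

lemma mul_psi_eq_tangentGap_div {γ ρ : ℝ} (ρb : ℝ) (hρ : ρ ≠ 0) :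
    ρ * psi γ ρ ρb = tangentGap γ ρb ρ / (γ - 1) := by
  rw [psi, tangentGap]
  field_simp

section TangentGap

variable {γ ρb : ℝ}

/-- Bernoulli's inequality at `s = t / ρb - 1`, rescaled by `ρb ^ γ`. -/
lemma tangentGap_nonneg (hγ : 1 ≤ γ) (hρb : 0 < ρb) {t : ℝ} (ht : 0 ≤ t) :
    0 ≤ tangentGap γ ρb t := by
  have hs : -1 ≤ t / ρb - 1 := by linarith [div_nonneg ht hρb.le]
  have hbern := one_add_mul_self_le_rpow_one_add hs hγ
  rw [add_sub_cancel, div_rpow ht hρb.le, le_div_iff₀ (rpow_pos_of_pos hρb γ)] at hbern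
  have hexpand : (1 + γ * (t / ρb - 1)) * ρb ^ γ = ρb ^ γ + γ * (ρb ^ γ / ρb) * (t - ρb) := by
    field_simp
  rw [tangentGap, rpow_sub_one hρb.ne']
  linarith

lemma hasDerivAt_tangentGap {t : ℝ} (ht : 0 < t) :
    HasDerivAt (tangentGap γ ρb) (γ * t ^ (γ - 1) - γ * ρb ^ (γ - 1)) t := by
  have hlin : HasDerivAt (fun t : ℝ => γ * ρb ^ (γ - 1) * (t - ρb)) (γ * ρb ^ (γ - 1)) t := by
    simpa using ((hasDerivAt_id t).sub_const ρb).const_mul (γ * ρb ^ (γ - 1))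
  exact ((hasDerivAt_rpow_const (Or.inl ht.ne')).sub_const (ρb ^ γ)).sub hlin

lemma continuous_tangentGap (hγ : 0 ≤ γ) : Continuous (tangentGap γ ρb) := by
  have : Continuous fun t : ℝ => t ^ γ := continuous_rpow_const hγ
  unfold tangentGap
  fun_prop

lemma tangentGap_strictAntiOn (hγ : 1 < γ) : StrictAntiOn (tangentGap γ ρb) (Icc 0 ρb) := by
  refine strictAntiOn_of_deriv_neg (convex_Icc 0 ρb)
    (continuous_tangentGap (by linarith)).continuousOn fun t ht => ?_
  rw [interior_Icc] at ht
  rw [(hasDerivAt_tangentGap ht.1).deriv, sub_neg]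
  exact mul_lt_mul_of_pos_left (rpow_lt_rpow ht.1.le ht.2 (by linarith)) (by linarith)

lemma tangentGap_pos_of_lt (hγ : 1 < γ) (hρb : 0 < ρb) {t : ℝ} (ht0 : 0 ≤ t) (ht : t < ρb) :
    0 < tangentGap γ ρb t := by
  have hρb_gap : tangentGap γ ρb ρb = 0 := by simp [tangentGap]
  rw [← hρb_gap]
  exact tangentGap_strictAntiOn hγ ⟨ht0, ht.le⟩ ⟨hρb.le, le_rfl⟩ ht

lemma mul_psi_nonneg (hγ : 1 < γ) (hρb : 0 < ρb) {t : ℝ} (ht : 0 < t) :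
    0 ≤ t * psi γ t ρb := by
  rw [mul_psi_eq_tangentGap_div ρb ht.ne']
  exact div_nonneg (tangentGap_nonneg hγ.le hρb ht.le) (by linarith)

lemma tangentGap_half_div_le_mul_psi (hγ : 1 < γ) {t : ℝ} (ht0 : 0 < t)
    (ht : t ≤ ρb / 2) : tangentGap γ ρb (ρb / 2) / (γ - 1) ≤ t * psi γ t ρb := by
  rw [mul_psi_eq_tangentGap_div ρb ht0.ne']
  gcongr
  exact (tangentGap_strictAntiOn hγ).antitoneOn ⟨ht0.le, by linarith⟩
    ⟨by linarith, by linarith⟩ ht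

end TangentGap

lemma abs_sub_le_of_integrable_deriv_sq {u : ℝ → ℝ} (hu : ContDiff ℝ 1 u)
    (hint : Integrable fun x => deriv u x ^ 2) (a b : ℝ) :
    |u b - u a| ≤ ((∫ x, deriv u x ^ 2) + |b - a|) / 2 := by
  wlog hab : a ≤ b generalizing a b
  · rw [abs_sub_comm, abs_sub_comm b]
    exact this b a (le_of_not_ge hab)
  rw [abs_of_nonneg (sub_nonneg.2 hab)]
  have hu' : Continuous (deriv u) := hu.continuous_deriv le_rfl
  have hsq : ∀ x, |deriv u x| ≤ (deriv u x ^ 2 + 1) / 2 := fun x => by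
    nlinarith [two_mul_le_add_sq |deriv u x| 1, sq_abs (deriv u x)]
  rw [← intervalIntegral.integral_deriv_eq_sub (fun x _ => hu.differentiable one_ne_zero x)
    (hu'.intervalIntegrable a b)]
  calc |∫ x in a..b, deriv u x|
      ≤ ∫ x in a..b, |deriv u x| := intervalIntegral.abs_integral_le_integral_abs hab
    _ ≤ ∫ x in a..b, (deriv u x ^ 2 + 1) / 2 :=
        intervalIntegral.integral_mono_on hab (hu'.abs.intervalIntegrable a b)
          ((((hu'.pow 2).add continuous_const).div_const 2).intervalIntegrable a b)
          fun x _ => hsq x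
    _ = ((∫ x in a..b, deriv u x ^ 2) + (b - a)) / 2 := by
        rw [intervalIntegral.integral_div,
          intervalIntegral.integral_add (f := fun x => deriv u x ^ 2)
            ((hu'.pow 2).intervalIntegrable a b) intervalIntegrable_const]
        simp
    _ ≤ ((∫ x, deriv u x ^ 2) + (b - a)) / 2 := by
        gcongr
        rw [intervalIntegral.integral_of_le hab]
        exact setIntegral_le_integral hint (Eventually.of_forall fun x => sq_nonneg _)

lemma sub_mul_le_integral_of_le_on_Icc {f : ℝ → ℝ} (hf : Integrable f) (hf0 : 0 ≤ f)
    {a b m : ℝ} (hab : a ≤ b) (hm : ∀ x ∈ Icc a b, m ≤ f x) :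
    (b - a) * m ≤ ∫ x, f x := by
  calc (b - a) * m ≤ ∫ x in Icc a b, f x := by
        have := setIntegral_ge_of_const_le_real measurableSet_Icc measure_Icc_lt_top.ne hm
          hf.integrableOn
        rwa [measureReal_def, Real.volume_Icc, ENNReal.toReal_ofReal (by linarith),
          mul_comm] at this
    _ ≤ ∫ x, f x := setIntegral_le_integral hf (Eventually.of_forall hf0)

theorem stmt7_general (γ α ρb E : ℝ) (hγ : 1 < γ) (hα : α < 1 / 2)
    (hρb : 0 < ρb) (hE : 0 < E) :
    ∃ c > 0, ∀ ρ : ℝ → ℝ, ContDiff ℝ 1 ρ → (∀ x, 0 < ρ x) →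
      Integrable (fun x => ρ x * psi γ (ρ x) ρb) →
      (∫ x, ρ x * psi γ (ρ x) ρb) ≤ E →
      Integrable (fun x => (deriv (fun y => ρ y ^ (α - 1 / 2)) x) ^ 2) →
      (∫ x, (deriv (fun y => ρ y ^ (α - 1 / 2)) x) ^ 2) ≤ E →
      ∀ x, c ≤ ρ x := by
  have hp : α - 1 / 2 < 0 := by linarith
  set m := tangentGap γ ρb (ρb / 2) / (γ - 1)
  have hm : 0 < m := div_pos (tangentGap_pos_of_lt hγ hρb (by linarith) (by linarith))
    (by linarith)
  -- On an interval of length `2δ` where `ρ ≤ ρb / 2` the energy is at least `2E`.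
  set δ := E / m
  set K := (ρb / 2) ^ (α - 1 / 2) + (E + δ) / 2 with hK_def
  have hK : 0 < K := by positivity
  refine ⟨K ^ (α - 1 / 2)⁻¹, by positivity, fun ρ hρ hpos hint hle hint' hle' x₀ => ?_⟩
  rw [rpow_inv_le_iff_of_neg hK (hpos x₀) hp]
  by_contra! hx₀
  have hu : ContDiff ℝ 1 fun y => ρ y ^ (α - 1 / 2) :=
    hρ.rpow_const_of_ne fun x => (hpos x).ne'
  have hnear : ∀ x ∈ Icc (x₀ - δ) (x₀ + δ), m ≤ ρ x * psi γ (ρ x) ρb := by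
    intro x hx
    have hosc := abs_sub_le_of_integrable_deriv_sq hu hint' x₀ x
    have hdist : |x - x₀| ≤ δ := abs_sub_le_iff.2 ⟨by linarith [hx.2], by linarith [hx.1]⟩
    have hρx : (ρb / 2) ^ (α - 1 / 2) < ρ x ^ (α - 1 / 2) := by
      linarith [(abs_sub_le_iff.1 hosc).2, hK_def]
    rw [rpow_lt_rpow_iff_of_neg (by linarith) (hpos x) hp] at hρx
    exact tangentGap_half_div_le_mul_psi hγ (hpos x) hρx.le
  have hlower := sub_mul_le_integral_of_le_on_Icc hint (fun x => mul_psi_nonneg hγ hρb (hpos x))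
    (by linarith [div_pos hE hm]) hnear
  have h2E : (x₀ + δ - (x₀ - δ)) * m = 2 * E := by
    rw [show x₀ + δ - (x₀ - δ) = 2 * δ by ring, mul_assoc, div_mul_cancel₀ E hm.ne']
  linarith

/-- Uniform positive lower bound for the density (Lemma 3.2, case `ρ̄ > 0`,
`0 < α < 1/2`). -/
theorem stmt7 (γ α ρb E : ℝ) (hγ : 1 < γ) (hα0 : 0 < α) (hα : α < 1 / 2)
    (hρb : 0 < ρb) (hE : 0 < E) :
    ∃ c > 0, ∀ ρ : ℝ → ℝ, ContDiff ℝ 1 ρ → (∀ x, 0 < ρ x) →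
      Integrable (fun x => ρ x * psi γ (ρ x) ρb) →
      (∫ x, ρ x * psi γ (ρ x) ρb) ≤ E →
      Integrable (fun x => (deriv (fun y => ρ y ^ (α - 1 / 2)) x) ^ 2) →
      (∫ x, (deriv (fun y => ρ y ^ (α - 1 / 2)) x) ^ 2) ≤ E →
      ∀ x, c ≤ ρ x :=
  stmt7_general γ α ρb E hγ hα hρb hE
end

section
/- Let γ > 1, 0 < α < 1/2 and E > 0. There exists a constant C > 0, depending only on γ, α and E, with the following property: if ρ : ℝ → ℝ is continuously differentiable, ρ(x) > 0 for all x, lim_{x→−∞} ρ(x) = 0, ∫_ℝ ρ(x)^γ dx ≤ E and ∫_ℝ ( (ρ^{α−1/2})'(x) )² dx ≤ E, then ρ(x) ≤ C for all x ∈ ℝ. -/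
open Real MeasureTheory Filter

/-! Put `θ = γ/2 + α - 1/2 > 0`. By the chain rule, `(ρ^θ)' = (θ / (α - 1/2)) ρ^{γ/2} (ρ^{α-1/2})'`,
and by Young's inequality this is at most a constant multiple of `ρ^γ + ((ρ^{α-1/2})')²`,
whose integral is at most `2E`. Since `ρ^θ → 0` at `-∞`, integrating from `-∞` to `x` bounds
`ρ(x)^θ` by a constant depending only on `γ`, `α` and `E`. -/

theorem le_add_integral_of_hasDerivAt_of_tendsto_atBot {f f' g : ℝ → ℝ} {L : ℝ}
    (hf : ∀ t, HasDerivAt f (f' t) t) (hf'g : ∀ t, f' t ≤ g t) (hg : Integrable g)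
    (hg0 : 0 ≤ g) (hlim : Tendsto f atBot (nhds L)) (x : ℝ) : f x ≤ L + ∫ t, g t := by
  have hbound : ∀ y ≤ x, f x ≤ f y + ∫ t, g t := fun y hy => by
    have hFTC : f x - f y ≤ ∫ t in y..x, g t :=
      intervalIntegral.sub_le_integral_of_hasDeriv_right_of_le hy
        (fun t _ => (hf t).continuousAt.continuousWithinAt)
        (fun t _ => (hf t).hasDerivWithinAt) hg.integrableOn fun t _ => hf'g t
    have hset : ∫ t in y..x, g t ≤ ∫ t, g t := by
      rw [intervalIntegral.integral_of_le hy]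
      exact setIntegral_le_integral hg (ae_of_all _ hg0)
    linarith
  exact ge_of_tendsto (hlim.add_const _) ((eventually_le_atBot x).mono hbound)

theorem hasDerivAt_rpow_add_eq_mul_deriv_rpow {ρ : ℝ → ℝ} {ρ' p q t : ℝ}
    (hρ : HasDerivAt ρ ρ' t) (hpos : 0 < ρ t) (hq : q ≠ 0) :
    HasDerivAt (fun y => ρ y ^ (p + q))
      ((p + q) / q * ρ t ^ p * deriv (fun y => ρ y ^ q) t) t := by
  rw [(hρ.rpow_const (p := q) (Or.inl hpos.ne')).deriv]
  convert hρ.rpow_const (p := p + q) (Or.inl hpos.ne') using 1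
  rw [show p + q - 1 = p + (q - 1) by ring, rpow_add hpos]
  field_simp

theorem mul_mul_le_abs_mul_add_sq (c a b : ℝ) : c * a * b ≤ |c| / 2 * (a ^ 2 + b ^ 2) := by
  have h : |a * b| ≤ (a ^ 2 + b ^ 2) / 2 := by
    rw [abs_le]; constructor <;> nlinarith [sq_nonneg (a + b), sq_nonneg (a - b)]
  calc c * a * b ≤ |c| * |a * b| := by rw [mul_assoc, ← abs_mul]; exact le_abs_self _
    _ ≤ |c| * ((a ^ 2 + b ^ 2) / 2) := by gcongr
    _ = |c| / 2 * (a ^ 2 + b ^ 2) := by ring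

/-- Uniform upper bound for the density (Lemma 3.2, vacuum far-field state
`ρ̄ = 0`, `0 < α < 1/2`). -/
theorem stmt8 (γ α E : ℝ) (hγ : 1 < γ) (hα0 : 0 < α) (hα : α < 1 / 2) (hE : 0 < E) :
    ∃ C > 0, ∀ ρ : ℝ → ℝ, ContDiff ℝ 1 ρ → (∀ x, 0 < ρ x) →
      Tendsto ρ atBot (nhds 0) →
      Integrable (fun x => ρ x ^ γ) →
      (∫ x, ρ x ^ γ) ≤ E →
      Integrable (fun x => (deriv (fun y => ρ y ^ (α - 1 / 2)) x) ^ 2) →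
      (∫ x, (deriv (fun y => ρ y ^ (α - 1 / 2)) x) ^ 2) ≤ E →
      ∀ x, ρ x ≤ C := by
  have hq : α - 1 / 2 ≠ 0 := (by linarith : α - 1 / 2 < 0).ne
  have hθ : 0 < γ / 2 + (α - 1 / 2) := by linarith
  set θ := γ / 2 + (α - 1 / 2)
  set c := θ / (α - 1 / 2)
  have hcE : 0 < |c| * E := mul_pos (abs_pos.2 (div_ne_zero hθ.ne' hq)) hE
  refine ⟨(|c| * E) ^ θ⁻¹, rpow_pos_of_pos hcE _, ?_⟩
  intro ρ hρ hpos hlim hint₁ hE₁ hint₂ hE₂ x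
  set v' := deriv (fun y => ρ y ^ (α - 1 / 2))
  have hderiv (t : ℝ) : HasDerivAt (fun y => ρ y ^ θ) (c * ρ t ^ (γ / 2) * v' t) t :=
    hasDerivAt_rpow_add_eq_mul_deriv_rpow (hρ.differentiable one_ne_zero t).hasDerivAt (hpos t) hq
  have hyoung (t : ℝ) : c * ρ t ^ (γ / 2) * v' t ≤ |c| / 2 * (ρ t ^ γ + v' t ^ 2) := by
    have hsq : (ρ t ^ (γ / 2)) ^ 2 = ρ t ^ γ := by
      rw [← rpow_mul_natCast (hpos t).le]; norm_num
    simpa only [hsq] using mul_mul_le_abs_mul_add_sq c (ρ t ^ (γ / 2)) (v' t)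
  have hlimθ : Tendsto (fun y => ρ y ^ θ) atBot (nhds 0) := by
    simpa only [zero_rpow hθ.ne'] using hlim.rpow_const (Or.inr hθ.le)
  have hx := le_add_integral_of_hasDerivAt_of_tendsto_atBot hderiv hyoung
    ((hint₁.add hint₂).const_mul _) (fun t => mul_nonneg (by positivity) (add_nonneg (rpow_nonneg (hpos t).le γ) (sq_nonneg _)))
    hlimθ x
  rw [integral_const_mul, integral_add hint₁ hint₂, zero_add] at hx
  rw [le_rpow_inv_iff_of_pos (hpos x).le hcE.le hθ]
  calc ρ x ^ θ ≤ |c| / 2 * ((∫ t, ρ t ^ γ) + ∫ t, v' t ^ 2) := hx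
    _ ≤ |c| / 2 * (E + E) := by gcongr
    _ = |c| * E := by ring
end

section
/- Let γ > 1, ρ̄ > 0 and E > 0. There exists a constant C > 0, depending only on ρ̄ and E, with the following property: if ρ : ℝ → ℝ is continuously differentiable, ρ(x) > 0 for all x, lim_{x→−∞} ρ(x) = ρ̄, ∫_ℝ (ρ(x) − ρ̄)² dx ≤ E and ∫_ℝ ( (log ρ)'(x) )² dx ≤ E, then ρ(x) ≤ C for all x ∈ ℝ. -/
/-! If `ρ x > 2ρ̄`, let `y` be the last point left of `x` with `ρ y ≤ 2ρ̄` (it exists since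
`ρ → ρ̄` at `-∞`). On `(y, x]` we have `(ρ - ρ̄)² ≥ ρ̄²`, so `x - y ≤ E / ρ̄²`. Young's inequality
`(log ρ)' ≤ ((log ρ)'² + ρ̄²) / (2ρ̄)` integrated over `[y, x]` then gives
`log ρ x - log ρ y ≤ E / ρ̄`, hence `ρ x ≤ 2ρ̄ exp (E / ρ̄)`. -/

open Real MeasureTheory Filter Set

theorem exists_lt_forall_Ioc_le_of_tendsto_atBot {f : ℝ → ℝ} {l c x : ℝ} (hf : Continuous f)
    (hl : Tendsto f atBot (nhds l)) (hlc : l < c) (hcx : c < f x) :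
    ∃ y < x, f y ≤ c ∧ ∀ z ∈ Ioc y x, c ≤ f z := by
  set S : Set ℝ := Iic x ∩ f ⁻¹' Iic c
  have hSne : S.Nonempty := by
    obtain ⟨z, hzc, hzx⟩ :=
      ((hl.eventually (eventually_le_nhds hlc)).and (eventually_le_atBot x)).exists
    exact ⟨z, hzx, hzc⟩
  have hSbdd : BddAbove S := ⟨x, fun z hz => hz.1⟩
  have hyS : sSup S ∈ S :=
    (isClosed_Iic.inter (isClosed_Iic.preimage hf)).csSup_mem hSne hSbdd
  refine ⟨sSup S, lt_of_le_of_ne hyS.1 fun h => ?_, hyS.2, fun z hz => ?_⟩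
  · exact (h ▸ hyS.2 : f x ≤ c).not_gt hcx
  · by_contra! hzc
    exact (le_csSup hSbdd ⟨hz.2, hzc.le⟩).not_gt hz.1

theorem mul_le_integral_of_le_on_Ioc {h : ℝ → ℝ} {y x c : ℝ} (hyx : y ≤ x) (hh : Integrable h)
    (h0 : 0 ≤ h) (hc : ∀ z ∈ Ioc y x, c ≤ h z) : (x - y) * c ≤ ∫ z, h z :=
  calc (x - y) * c = ∫ _ in Ioc y x, c := by
        rw [setIntegral_const, Real.volume_real_Ioc_of_le hyx, smul_eq_mul]
    _ ≤ ∫ z in Ioc y x, h z :=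
        setIntegral_mono_on (integrableOn_const measure_Ioc_lt_top.ne) hh.integrableOn
          measurableSet_Ioc hc
    _ ≤ ∫ z, h z := setIntegral_le_integral hh (ae_of_all _ h0)

theorem intervalIntegral_le_of_integrable_sq {g : ℝ → ℝ} {y x a : ℝ} (hyx : y ≤ x) (ha : 0 < a)
    (hg : IntervalIntegrable g volume y x) (hg2 : Integrable fun z => g z ^ 2) :
    ∫ z in y..x, g z ≤ ((∫ z, g z ^ 2) + (x - y) * a ^ 2) / (2 * a) := by
  have hg2' : IntervalIntegrable (fun z => g z ^ 2) volume y x := hg2.intervalIntegrable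
  have hyoung : ∀ z, g z ≤ (g z ^ 2 + a ^ 2) / (2 * a) := fun z => by
    rw [le_div_iff₀ (by positivity)]
    nlinarith [sq_nonneg (g z - a)]
  have hsq : ∫ z in y..x, g z ^ 2 ≤ ∫ z, g z ^ 2 := by
    rw [intervalIntegral.integral_of_le hyx]
    exact setIntegral_le_integral hg2 (ae_of_all _ fun z => sq_nonneg _)
  calc ∫ z in y..x, g z ≤ ∫ z in y..x, (g z ^ 2 + a ^ 2) / (2 * a) :=
        intervalIntegral.integral_mono_on hyx hg ((hg2'.add intervalIntegrable_const).div_const _)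
          fun z _ => hyoung z
    _ = ((∫ z in y..x, g z ^ 2) + (x - y) * a ^ 2) / (2 * a) := by
        rw [intervalIntegral.integral_div, intervalIntegral.integral_add hg2' intervalIntegrable_const,
          intervalIntegral.integral_const, smul_eq_mul]
    _ ≤ ((∫ z, g z ^ 2) + (x - y) * a ^ 2) / (2 * a) := by gcongr

theorem log_sub_log_le_of_integral_sq_deriv_log {ρ : ℝ → ℝ} {y x a E : ℝ} (hρ : ContDiff ℝ 1 ρ)
    (hpos : ∀ z, 0 < ρ z) (hyx : y ≤ x) (ha : 0 < a)
    (hint : Integrable fun z => deriv (fun y => Real.log (ρ y)) z ^ 2)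
    (hI : ∫ z, deriv (fun y => Real.log (ρ y)) z ^ 2 ≤ E) (hlen : (x - y) * a ^ 2 ≤ E) :
    Real.log (ρ x) - Real.log (ρ y) ≤ E / a := by
  have hlog : ContDiff ℝ 1 fun y => Real.log (ρ y) := hρ.log fun z => (hpos z).ne'
  rw [← intervalIntegral.integral_deriv_eq_sub (fun z _ => hlog.differentiable one_ne_zero z)
    ((hlog.continuous_deriv le_rfl).intervalIntegrable _ _)]
  calc _ ≤ _ := intervalIntegral_le_of_integrable_sq hyx ha
        ((hlog.continuous_deriv le_rfl).intervalIntegrable _ _) hint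
    _ ≤ (E + E) / (2 * a) := by gcongr
    _ = E / a := by field_simp; ring

theorem stmt10_general (ρb E : ℝ) (hρb : 0 < ρb) :
    ∃ C > 0, ∀ γ : ℝ, 1 < γ → ∀ ρ : ℝ → ℝ, ContDiff ℝ 1 ρ → (∀ x, 0 < ρ x) →
      Tendsto ρ atBot (nhds ρb) →
      Integrable (fun x => (ρ x - ρb) ^ 2) →
      (∫ x, (ρ x - ρb) ^ 2) ≤ E →
      Integrable (fun x => (deriv (fun y => Real.log (ρ y)) x) ^ 2) →
      (∫ x, (deriv (fun y => Real.log (ρ y)) x) ^ 2) ≤ E →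
      ∀ x, ρ x ≤ C := by
  refine ⟨2 * ρb * exp (E / ρb), by positivity, fun γ _ ρ hρ hpos hlim hint1 hI1 hint2 hI2 x => ?_⟩
  have hE : 0 ≤ E := (integral_nonneg fun z => sq_nonneg _).trans hI1
  by_cases hx : ρ x ≤ 2 * ρb
  · nlinarith [one_le_exp (div_nonneg hE hρb.le)]
  obtain ⟨y, hyx, hy, hbig⟩ := exists_lt_forall_Ioc_le_of_tendsto_atBot hρ.continuous hlim
    (by linarith) (not_le.1 hx)
  have hlen : (x - y) * ρb ^ 2 ≤ E :=
    (mul_le_integral_of_le_on_Ioc hyx.le hint1 (fun z => sq_nonneg _)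
      fun z hz => by nlinarith [hbig z hz]).trans hI1
  have hlog := log_sub_log_le_of_integral_sq_deriv_log hρ hpos hyx.le hρb hint2 hI2 hlen
  calc ρ x = exp (Real.log (ρ x)) := (exp_log (hpos x)).symm
    _ ≤ exp (Real.log (2 * ρb) + E / ρb) := by
        gcongr
        linarith [Real.log_le_log (hpos y) hy]
    _ = 2 * ρb * exp (E / ρb) := by rw [exp_add, exp_log (by positivity)]

/-- Uniform upper bound for the density (Lemma 3.6, case `α = 1/2`, `ρ̄ > 0`);
the constant depends only on `ρ̄` and `E`, not on `γ`. -/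
theorem stmt10 (ρb E : ℝ) (hρb : 0 < ρb) (hE : 0 < E) :
    ∃ C > 0, ∀ γ : ℝ, 1 < γ → ∀ ρ : ℝ → ℝ, ContDiff ℝ 1 ρ → (∀ x, 0 < ρ x) →
      Tendsto ρ atBot (nhds ρb) →
      Integrable (fun x => (ρ x - ρb) ^ 2) →
      (∫ x, (ρ x - ρb) ^ 2) ≤ E →
      Integrable (fun x => (deriv (fun y => Real.log (ρ y)) x) ^ 2) →
      (∫ x, (deriv (fun y => Real.log (ρ y)) x) ^ 2) ≤ E →
      ∀ x, ρ x ≤ C :=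
  stmt10_general ρb E hρb
end

section
/- Let γ > 1 and E > 0. There exists a constant C > 0, depending only on γ and E, with the following property: if ρ : ℝ → ℝ is continuously differentiable, ρ(x) > 0 for all x, lim_{x→−∞} ρ(x) = 0, ∫_ℝ ρ(x)^γ dx ≤ E and ∫_ℝ ( (log ρ)'(x) )² dx ≤ E, then ρ(x) ≤ C for all x ∈ ℝ. -/
/-!
Put `f = ρ ^ (γ / 2)`. Then `f' = (γ / 2) · f · (log ρ)'`, so Young's inequality gives
`|f'| ≤ (γ / 4) (ρ ^ γ + ((log ρ)')²)`, an integrable majorant with integral at most `γ E / 2`.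
Since `f → 0` at `-∞`, the fundamental theorem of calculus yields `f x ≤ ∫ |f'| ≤ γ E / 2`,
i.e. `ρ x ≤ (γ E / 2) ^ (2 / γ)`.
-/

open Real MeasureTheory Filter Topology

lemma le_integral_abs_deriv_of_tendsto_atBot {f : ℝ → ℝ} (hf : Differentiable ℝ f)
    (hf' : Integrable (deriv f)) (hf0 : Tendsto f atBot (𝓝 0)) (x : ℝ) :
    f x ≤ ∫ y, |deriv f y| := by
  have hFTC : ∫ y in Set.Iic x, deriv f y = f x - 0 :=
    integral_Iic_of_hasDerivAt_of_tendsto' (fun y _ => (hf y).hasDerivAt) hf'.integrableOn hf0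
  calc f x = ∫ y in Set.Iic x, deriv f y := by rw [hFTC, sub_zero]
    _ ≤ ‖∫ y in Set.Iic x, deriv f y‖ := le_norm_self _
    _ ≤ ∫ y in Set.Iic x, |deriv f y| := norm_integral_le_integral_norm _
    _ ≤ ∫ y, |deriv f y| :=
        setIntegral_le_integral hf'.abs (Eventually.of_forall fun y => abs_nonneg _)

lemma hasDerivAt_rpow_const_of_pos {ρ : ℝ → ℝ} {x : ℝ} (p : ℝ) (hρ : DifferentiableAt ℝ ρ x)
    (hx : 0 < ρ x) :
    HasDerivAt (fun y => ρ y ^ p) (p * ρ x ^ p * deriv (fun y => log (ρ y)) x) x := by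
  convert hρ.hasDerivAt.rpow_const (p := p) (Or.inl hx.ne') using 1
  rw [deriv.log hρ hx.ne', rpow_sub_one hx.ne']
  field_simp

lemma rpow_div_two_sq {a : ℝ} (ha : 0 ≤ a) (p : ℝ) : (a ^ (p / 2)) ^ 2 = a ^ p := by
  rw [← rpow_natCast, ← rpow_mul ha]
  norm_num

lemma abs_mul_mul_le_of_nonneg {p a : ℝ} (hp : 0 ≤ p) (ha : 0 ≤ a) (g : ℝ) :
    |p * a * g| ≤ p / 2 * (a ^ 2 + g ^ 2) := by
  rw [abs_mul, abs_mul, abs_of_nonneg hp, abs_of_nonneg ha, ← sq_abs g]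
  nlinarith [two_mul_le_add_sq a |g|]

/-- Uniform upper bound for the density (Lemma 3.6, vacuum far-field state
`ρ̄ = 0`, viscosity exponent `α = 1/2`). -/
theorem stmt11 (γ E : ℝ) (hγ : 1 < γ) (hE : 0 < E) :
    ∃ C > 0, ∀ ρ : ℝ → ℝ, ContDiff ℝ 1 ρ → (∀ x, 0 < ρ x) →
      Tendsto ρ atBot (nhds 0) →
      Integrable (fun x => ρ x ^ γ) →
      (∫ x, ρ x ^ γ) ≤ E →
      Integrable (fun x => (deriv (fun y => Real.log (ρ y)) x) ^ 2) →
      (∫ x, (deriv (fun y => Real.log (ρ y)) x) ^ 2) ≤ E →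
      ∀ x, ρ x ≤ C := by
  have hp : 0 < γ / 2 := by positivity
  refine ⟨(γ * E / 2) ^ (γ / 2)⁻¹, by positivity, ?_⟩
  intro ρ hρ hpos hρ0 hint hE₁ hint' hE₂ x
  set g := fun y => deriv (fun y => log (ρ y)) y
  set f := fun y => ρ y ^ (γ / 2)
  have hf : ∀ y, HasDerivAt f (γ / 2 * f y * g y) y := fun y =>
    hasDerivAt_rpow_const_of_pos _ (hρ.differentiable one_ne_zero y) (hpos y)
  have hdom : ∀ y, |deriv f y| ≤ γ / 2 / 2 * (ρ y ^ γ + g y ^ 2) := fun y => by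
    rw [(hf y).deriv, ← rpow_div_two_sq (hpos y).le]
    exact abs_mul_mul_le_of_nonneg hp.le (rpow_nonneg (hpos y).le _) _
  have hmaj : Integrable fun y => γ / 2 / 2 * (ρ y ^ γ + g y ^ 2) := (hint.add hint').const_mul _
  have hf' : Integrable (deriv f) :=
    hmaj.mono' (measurable_deriv f).aestronglyMeasurable (Eventually.of_forall hdom)
  have hf0 : Tendsto f atBot (𝓝 0) := by
    simpa [zero_rpow hp.ne'] using hρ0.rpow_const (p := γ / 2) (Or.inr hp.le)
  have hfx : f x ≤ γ * E / 2 := calc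
    f x ≤ ∫ y, |deriv f y| :=
        le_integral_abs_deriv_of_tendsto_atBot (fun y => (hf y).differentiableAt) hf' hf0 x
    _ ≤ ∫ y, γ / 2 / 2 * (ρ y ^ γ + g y ^ 2) := integral_mono hf'.abs hmaj hdom
    _ = γ / 2 / 2 * ((∫ y, ρ y ^ γ) + ∫ y, g y ^ 2) := by
        rw [integral_const_mul, integral_add hint hint']
    _ ≤ γ / 2 / 2 * (E + E) := by gcongr
    _ = γ * E / 2 := by ring
  calc ρ x = f x ^ (γ / 2)⁻¹ := (rpow_rpow_inv (hpos x).le hp.ne').symm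
    _ ≤ (γ * E / 2) ^ (γ / 2)⁻¹ := rpow_le_rpow (rpow_nonneg (hpos x).le _) hfx (by positivity)
end
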